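/- arXiv:2008.10223 — 7 statements merged into one kernel-verified Lean document; each statement's English description precedes it below -/
import Mathlib

section
/- There is an absolute constant c ≥ 1 such that for all integers k ≥ 1, the sum over i = 1 to k-1 of (k/i)^{i/2}·(k/(k-i))^{(k-i)/2}·(i(k-i))^{-1/2} is at most c·√(2^k/k). -/
/-!
With `x = i` and `y = k - i`, the summand is
`exp ((x log ((x+y)/x) + y log ((x+y)/y)) / 2) / √(xy)`. Applying `log t ≤ 2 (√t - 1)` to
`t = (x+y)/(2x)` and `t = (x+y)/(2y)` bounds the exponent by
`(x+y) log 2 / 2 - (x-y)² / (8 (x+y))`, so the summand is at most `2^(k/2)` times a Gaussian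
in `2i - k` of width `√k`. Half of the Gaussian decay absorbs the factor `1/√(i(k-i))` into
`8/k`, and the remaining Gaussian sum over the integers is `O(√k)` by the transformation
formula of the Jacobi theta function.
-/

open Real Finset

lemma log_le_two_mul_sqrt_sub_one {t : ℝ} (ht : 0 < t) : log t ≤ 2 * (√t - 1) := by
  have h := log_le_sub_one_of_pos (sqrt_pos.2 ht)
  rw [log_sqrt ht.le] at h
  linarith

lemma mul_log_div_le {x s : ℝ} (hx : 0 < x) (hs : 0 < s) :
    x * log (s / x) ≤ x * log 2 + √(2 * s) * √x - 2 * x := by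
  have hsx : s / x = 2 * (s / (2 * x)) := by field_simp
  have hsqrt : x * √(s / (2 * x)) = √(2 * s) * √x / 2 := by
    have hx' : x = √x ^ 2 := (sq_sqrt hx.le).symm
    have hdiv : s / (2 * x) = 2 * s / (2 * √x) ^ 2 := by
      rw [mul_pow, ← hx']; field_simp
    rw [hdiv, sqrt_div' _ (sq_nonneg _), sqrt_sq (by positivity)]
    nth_rw 1 [hx']
    field_simp
  have h := log_le_two_mul_sqrt_sub_one (by positivity : 0 < s / (2 * x))
  rw [hsx, log_mul two_ne_zero (by positivity)]
  nlinarith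

lemma mul_log_add_div_add_mul_log_add_div_le {x y : ℝ} (hx : 0 < x) (hy : 0 < y) :
    x * log ((x + y) / x) + y * log ((x + y) / y) ≤
      (x + y) * log 2 - (x - y) ^ 2 / (4 * (x + y)) := by
  have hs : 0 < x + y := by linarith
  have h₁ := mul_log_div_le hx hs
  have h₂ := mul_log_div_le hy hs
  set a := √x
  set b := √y
  set r := √(2 * (x + y))
  have ha : a ^ 2 = x := sq_sqrt hx.le
  have hb : b ^ 2 = y := sq_sqrt hy.le
  have hr : r ^ 2 = 2 * (x + y) := sq_sqrt (by positivity)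
  have hquad : (x - y) ^ 2 / (4 * (x + y)) ≤ (a - b) ^ 2 / 2 := by
    rw [div_le_div_iff₀ (by positivity) two_pos, ← ha, ← hb]
    nlinarith [sq_nonneg (a - b), sq_nonneg (a + b)]
  -- `r (a + b) ≤ (r² + (a + b)²) / 2 = 2 (x + y) - (a - b)² / 2`
  nlinarith [sq_nonneg (r - (a + b))]

lemma rpow_half_mul_rpow_half_le {x y : ℝ} (hx : 0 < x) (hy : 0 < y) :
    ((x + y) / x) ^ (x / 2) * ((x + y) / y) ^ (y / 2) ≤
      2 ^ ((x + y) / 2) * exp (-((x - y) ^ 2 / (8 * (x + y)))) := by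
  have h := mul_log_add_div_add_mul_log_add_div_le hx hy
  have hs : 0 < x + y := by linarith
  rw [rpow_def_of_pos (by positivity), rpow_def_of_pos (by positivity),
    rpow_def_of_pos two_pos, ← exp_add, ← exp_add, exp_le_exp]
  have : (x - y) ^ 2 / (8 * (x + y)) = (x - y) ^ 2 / (4 * (x + y)) / 2 := by
    field_simp; ring
  rw [this]
  linarith

lemma add_mul_exp_neg_sq_le {x y : ℝ} (hx : 1 ≤ x) (hy : 1 ≤ y) :
    (x + y) * exp (-((x - y) ^ 2 / (16 * (x + y)))) ≤ 8 * √(x * y) := by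
  have hs : 0 < x + y := by linarith
  set E := exp (-((x - y) ^ 2 / (16 * (x + y))))
  have hE : E ^ 2 = exp (-((x - y) ^ 2 / (8 * (x + y)))) := by
    rw [← exp_nat_mul]; congr 1; field_simp; ring
  suffices (x + y) ^ 2 * E ^ 2 ≤ 64 * (x * y) by
    refine (pow_le_pow_iff_left₀ (by positivity) (by positivity) two_ne_zero).1 ?_
    rw [mul_pow, mul_pow, sq_sqrt (by nlinarith)]
    linarith
  rw [hE]
  rcases le_total ((x - y) ^ 2) ((x + y) ^ 2 / 4) with hnear | hfar
  · have hexp : exp (-((x - y) ^ 2 / (8 * (x + y)))) ≤ 1 := exp_le_one_iff.2 (by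
      have : 0 ≤ (x - y) ^ 2 / (8 * (x + y)) := by positivity
      linarith)
    nlinarith
  · have hexp : exp (-((x - y) ^ 2 / (8 * (x + y)))) ≤ 32 / (x + y) := by
      calc exp (-((x - y) ^ 2 / (8 * (x + y)))) ≤ exp (-((x + y) / 32)) := by
            rw [exp_le_exp, neg_le_neg_iff, div_le_div_iff₀ (by norm_num) (by positivity)]
            nlinarith
        _ = (exp ((x + y) / 32))⁻¹ := exp_neg _
        _ ≤ ((x + y) / 32)⁻¹ := by
            gcongr
            linarith [add_one_le_exp ((x + y) / 32)]
        _ = 32 / (x + y) := by rw [inv_div]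
    calc (x + y) ^ 2 * exp (-((x - y) ^ 2 / (8 * (x + y)))) ≤ (x + y) ^ 2 * (32 / (x + y)) := by
          gcongr
      _ = 32 * (x + y) := by field_simp
      _ ≤ 64 * (x * y) := by nlinarith [mul_nonneg (sub_nonneg.2 hx) (sub_nonneg.2 hy)]

lemma rpow_half_mul_rpow_half_div_sqrt_le {x y : ℝ} (hx : 1 ≤ x) (hy : 1 ≤ y) :
    ((x + y) / x) ^ (x / 2) * ((x + y) / y) ^ (y / 2) / √(x * y) ≤
      8 * 2 ^ ((x + y) / 2) / (x + y) * exp (-((x - y) ^ 2 / (16 * (x + y)))) := by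
  have hs : 0 < x + y := by linarith
  have hxy : 0 < √(x * y) := sqrt_pos.2 (by nlinarith)
  set E := exp (-((x - y) ^ 2 / (16 * (x + y))))
  have hE : exp (-((x - y) ^ 2 / (8 * (x + y)))) = E * E := by
    rw [← exp_add]; congr 1; field_simp; ring
  have h₁ := rpow_half_mul_rpow_half_le (by linarith : 0 < x) (by linarith : 0 < y)
  have h₂ := add_mul_exp_neg_sq_le hx hy
  rw [hE] at h₁
  rw [div_le_iff₀ hxy]
  calc _ ≤ 2 ^ ((x + y) / 2) * (E * E) := h₁
    _ ≤ 2 ^ ((x + y) / 2) * E * (8 * √(x * y)) / (x + y) := by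
        rw [le_div_iff₀ hs]
        linear_combination
          mul_le_mul_of_nonneg_left h₂ (by positivity : 0 ≤ 2 ^ ((x + y) / 2) * E)
    _ = _ := by ring

lemma summable_exp_neg_pi_mul_int_sq {a : ℝ} (ha : 0 < a) :
    Summable fun n : ℤ ↦ exp (-π * a * n ^ 2) :=
  (HurwitzKernelBounds.summable_f_int 0 0 ha).congr fun n ↦ by
    simp only [HurwitzKernelBounds.f_int, add_zero, pow_zero, neg_mul, one_mul, exp_eq_exp,
      neg_inj]
    ring

lemma sum_exp_neg_pi_mul_int_sq_le (s : Finset ℤ) {a : ℝ} (ha : 0 < a) (ha₁ : a ≤ 1) :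
    ∑ n ∈ s, exp (-π * a * n ^ 2) ≤ (∑' n : ℤ, exp (-π * n ^ 2)) / √a := by
  have hmono : ∑' n : ℤ, exp (-π / a * n ^ 2) ≤ ∑' n : ℤ, exp (-π * n ^ 2) := by
    refine Summable.tsum_le_tsum (fun n ↦ ?_) ?_ ?_
    · rw [exp_le_exp, neg_div, neg_mul, neg_mul, neg_le_neg_iff]
      gcongr
      exact le_div_self pi_pos.le ha ha₁
    · simpa [div_eq_mul_inv] using summable_exp_neg_pi_mul_int_sq (inv_pos.2 ha)
    · simpa using summable_exp_neg_pi_mul_int_sq one_pos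
  calc ∑ n ∈ s, exp (-π * a * n ^ 2)
      ≤ ∑' n : ℤ, exp (-π * a * n ^ 2) :=
        (summable_exp_neg_pi_mul_int_sq ha).sum_le_tsum s fun _ _ ↦ (exp_pos _).le
    _ = (∑' n : ℤ, exp (-π / a * n ^ 2)) / √a := by
        rw [tsum_exp_neg_mul_int_sq ha, sqrt_eq_rpow]; ring
    _ ≤ (∑' n : ℤ, exp (-π * n ^ 2)) / √a := by gcongr

lemma summand_le_of_mem_Ico {k i : ℕ} (hi : i ∈ Ico 1 k) :
    ((k : ℝ) / i) ^ ((i : ℝ) / 2) * ((k : ℝ) / ((k : ℝ) - i)) ^ (((k : ℝ) - i) / 2) /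
        √((i : ℝ) * ((k : ℝ) - i)) ≤
      8 * 2 ^ ((k : ℝ) / 2) / k * exp (-(((2 * i - k : ℤ) : ℝ) ^ 2 / (16 * k))) := by
  obtain ⟨hi₁, hik⟩ := mem_Ico.1 hi
  have h := rpow_half_mul_rpow_half_div_sqrt_le (x := i) (y := k - i) (by exact_mod_cast hi₁)
    (by rw [le_sub_iff_add_le']; exact_mod_cast hik)
  rw [add_sub_cancel] at h
  convert h using 5
  push_cast
  ring

lemma sum_Ico_exp_neg_sq_le {k : ℕ} (hk : 1 ≤ k) :
    ∑ i ∈ Ico 1 k, exp (-(((2 * i - k : ℤ) : ℝ) ^ 2 / (16 * k))) ≤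
      4 * √π * (∑' n : ℤ, exp (-π * n ^ 2)) * √k := by
  have hk₀ : (0 : ℝ) < k := by exact_mod_cast hk
  set a := (16 * π * k)⁻¹
  have ha₁ : a ≤ 1 :=
    inv_le_one_of_one_le₀ (by nlinarith [pi_gt_three, (by exact_mod_cast hk : (1 : ℝ) ≤ k)])
  have h := sum_exp_neg_pi_mul_int_sq_le ((Ico 1 k).image fun i : ℕ ↦ (2 * i - k : ℤ))
    (by positivity) ha₁
  rw [sum_image fun i _ j _ hij ↦ by omega] at h
  convert h using 1
  · refine sum_congr rfl fun i _ ↦ ?_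
    simp only [a]
    field_simp
  · rw [sqrt_inv, sqrt_mul' _ hk₀.le, sqrt_mul' _ pi_pos.le,
      show (16 : ℝ) = 4 ^ 2 by norm_num, sqrt_sq (by norm_num)]
    field_simp

theorem sqrt_double_binomial_sum :
    ∃ c : ℝ, 1 ≤ c ∧ ∀ k : ℕ, 1 ≤ k →
      ∑ i ∈ Finset.Ico 1 k,
          ((k : ℝ) / i) ^ ((i : ℝ) / 2) * ((k : ℝ) / ((k : ℝ) - i)) ^ (((k : ℝ) - i) / 2) /
            Real.sqrt ((i : ℝ) * ((k : ℝ) - i)) ≤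
        c * Real.sqrt (2 ^ k / (k : ℝ)) := by
  set θ := ∑' n : ℤ, exp (-π * n ^ 2)
  refine ⟨max 1 (32 * √π * θ), le_max_left _ _, fun k hk ↦ ?_⟩
  have hk₀ : (0 : ℝ) < k := by exact_mod_cast hk
  have hpow : (2 : ℝ) ^ ((k : ℝ) / 2) = √(2 ^ k) := by
    rw [sqrt_eq_rpow, ← rpow_natCast, ← rpow_mul two_pos.le]; ring_nf
  calc _ ≤ ∑ i ∈ Ico 1 k, 8 * 2 ^ ((k : ℝ) / 2) / k *
          exp (-(((2 * i - k : ℤ) : ℝ) ^ 2 / (16 * k))) :=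
        sum_le_sum fun i hi ↦ summand_le_of_mem_Ico hi
    _ ≤ 8 * 2 ^ ((k : ℝ) / 2) / k * (4 * √π * θ * √k) := by
        rw [← mul_sum]; gcongr; exact sum_Ico_exp_neg_sq_le hk
    _ = 32 * √π * θ * √(2 ^ k / k) := by
        rw [hpow, sqrt_div' _ hk₀.le]
        field_simp
        rw [sq_sqrt hk₀.le]
        ring
    _ ≤ max 1 (32 * √π * θ) * √(2 ^ k / k) := by gcongr; exact le_max_right _ _
end

section
/- There is an absolute constant c ≥ 1 such that for all positive integers n and k, the family of all k-element subsets of {1,...,n} can be partitioned into pairwise disjoint elementary families E₁,...,E_N with Σᵢ |Eᵢ|^{1/2} ≤ ((2+√2)c)^{k-1}·k^{-1/2}·(2n/k)^{k/2}. -/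
/-- `I` is a set of consecutive natural numbers (an integer interval). -/
def IsNatInterval (I : Finset ℕ) : Prop :=
  ∀ a ∈ I, ∀ b ∈ I, ∀ c : ℕ, a ≤ c → c ≤ b → c ∈ I

/-- The operation `A ∗ B = {A ∪ B : A ∈ A, B ∈ B}`. -/
def famStar (A B : Finset (Finset ℕ)) : Finset (Finset ℕ) :=
  (A ×ˢ B).image fun p => p.1 ∪ p.2

/-- `C(I₁,k₁) ∗ C(I₂,k₂) ∗ ⋯ ∗ C(I_ℓ,k_ℓ)` for a list of pairs `(Iⱼ, kⱼ)`. -/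
def starList : List (Finset ℕ × ℕ) → Finset (Finset ℕ)
  | [] => {∅}
  | p :: t => famStar (Finset.powersetCard p.2 p.1) (starList t)

/-- An elementary family: `C(I₁,k₁) ∗ ⋯ ∗ C(I_ℓ,k_ℓ)` with `ℓ ≥ 1`, the `Iⱼ` pairwise
disjoint integer intervals, and `kⱼ ∈ {0,1,2}`. -/
def IsElementary (E : Finset (Finset ℕ)) : Prop :=
  ∃ L : List (Finset ℕ × ℕ), L ≠ [] ∧ (∀ p ∈ L, IsNatInterval p.1 ∧ p.2 ≤ 2) ∧
    L.Pairwise (fun p q => Disjoint p.1 q.1) ∧ E = starList L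

/-- `E₁, ..., E_N` is a partition of `A` into pairwise disjoint elementary families. -/
def IsElemPartition (A : Finset (Finset ℕ)) {N : ℕ} (E : Fin N → Finset (Finset ℕ)) : Prop :=
  (∀ i, IsElementary (E i)) ∧ (∀ i j, i ≠ j → Disjoint (E i) (E j)) ∧
    Finset.univ.biUnion E = A

/-- The partition measure `π(A)`: the minimum of `Σᵢ |Eᵢ|^(1/2)` over all partitions of `A`
into pairwise disjoint elementary families. -/
noncomputable def piMeasure (A : Finset (Finset ℕ)) : ℝ :=
  sInf { s : ℝ | ∃ (N : ℕ) (E : Fin N → Finset (Finset ℕ)),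
    IsElemPartition A E ∧ s = ∑ i, Real.sqrt ((E i).card) }

/-!
Split the ground interval `[a, a + n)` into halves `L`, `R` of sizes `l = ⌈n/2⌉`, `r = ⌊n/2⌋`.
Then `C(L ∪ R, k)` is the disjoint union over `j` of `C(L, j) ∗ C(R, k - j)`, and since `L` and
`R` are disjoint, partitions of the two factors multiply, with cost multiplying too. Induction on
`n` gives a partition of `C([n], k)` of cost `w k · √C(n, k)`, the case `k ≤ 2` being a single
elementary family. For `k ≥ 3` the terms `j = k` and `j = 0` cost at most `1/2` and `3/8` of
`w k · √C(n, k)`, since a half interval carries at most `1/4` resp. `1/8` of the `k`-sets; each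
middle term is at most `w j · w (k - j) · √C(n, k)`, and taking `w (k + 1) = 8^k · catalan k` the
Catalan recursion makes these sum to `w k / 8`. Finally, `catalan k ≤ 4^k` and Stirling's
formula bound `w k · √C(n, k)` by `((2 + √2) c)^(k-1) k^(-1/2) (2n/k)^(k/2)` with `c = 32`.
-/

open Finset

section FamStar

lemma mem_famStar {A B : Finset (Finset ℕ)} {X : Finset ℕ} :
    X ∈ famStar A B ↔ ∃ a ∈ A, ∃ b ∈ B, a ∪ b = X := by
  simp [famStar, and_assoc]

lemma famStar_assoc (A B C : Finset (Finset ℕ)) :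
    famStar (famStar A B) C = famStar A (famStar B C) := by
  ext X
  simp only [mem_famStar]
  constructor
  · rintro ⟨_, ⟨a, ha, b, hb, rfl⟩, c, hc, rfl⟩
    exact ⟨a, ha, b ∪ c, ⟨b, hb, c, hc, rfl⟩, (union_assoc a b c).symm⟩
  · rintro ⟨a, ha, _, ⟨b, hb, c, hc, rfl⟩, rfl⟩
    exact ⟨a ∪ b, ⟨a, ha, b, hb, rfl⟩, c, hc, union_assoc a b c⟩

lemma singleton_empty_famStar (A : Finset (Finset ℕ)) : famStar {∅} A = A := by
  ext X
  simp [mem_famStar]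

lemma famStar_singleton_empty (A : Finset (Finset ℕ)) : famStar A {∅} = A := by
  ext X
  simp [mem_famStar]

lemma starList_append (L M : List (Finset ℕ × ℕ)) :
    starList (L ++ M) = famStar (starList L) (starList M) := by
  induction L with
  | nil => simp [starList, singleton_empty_famStar]
  | cons p L ih => simp [starList, ih, famStar_assoc]

lemma famStar_biUnion_biUnion {ι κ : Type*} (s : Finset ι) (t : Finset κ)
    (f : ι → Finset (Finset ℕ)) (g : κ → Finset (Finset ℕ)) :
    famStar (s.biUnion f) (t.biUnion g) = (s ×ˢ t).biUnion fun p => famStar (f p.1) (g p.2) := by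
  ext X
  simp only [mem_famStar, mem_biUnion, mem_product, Prod.exists]
  constructor
  · rintro ⟨a, ⟨i, hi, ha⟩, b, ⟨j, hj, hb⟩, rfl⟩
    exact ⟨i, j, ⟨hi, hj⟩, a, ha, b, hb, rfl⟩
  · rintro ⟨i, j, ⟨hi, hj⟩, a, ha, b, hb, rfl⟩
    exact ⟨a, ⟨i, hi, ha⟩, b, ⟨j, hj, hb⟩, rfl⟩

variable {I J : Finset ℕ} {A B : Finset (Finset ℕ)}

lemma union_inter_eq_left_of_disjoint {a b : Finset ℕ} (hIJ : Disjoint I J) (ha : a ⊆ I)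
    (hb : b ⊆ J) : (a ∪ b) ∩ I = a := by
  rw [union_inter_distrib_right, inter_eq_left.mpr ha,
    disjoint_iff_inter_eq_empty.mp (disjoint_of_subset_left hb hIJ.symm), union_empty]

lemma union_inter_eq_right_of_disjoint {a b : Finset ℕ} (hIJ : Disjoint I J) (ha : a ⊆ I)
    (hb : b ⊆ J) : (a ∪ b) ∩ J = b := by
  rw [union_comm, union_inter_eq_left_of_disjoint hIJ.symm hb ha]

lemma inter_mem_of_mem_famStar (hIJ : Disjoint I J) (hA : ∀ a ∈ A, a ⊆ I)
    (hB : ∀ b ∈ B, b ⊆ J) {X : Finset ℕ} (hX : X ∈ famStar A B) : X ∩ I ∈ A ∧ X ∩ J ∈ B := by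
  obtain ⟨a, ha, b, hb, rfl⟩ := mem_famStar.mp hX
  rw [union_inter_eq_left_of_disjoint hIJ (hA a ha) (hB b hb),
    union_inter_eq_right_of_disjoint hIJ (hA a ha) (hB b hb)]
  exact ⟨ha, hb⟩

lemma card_famStar (hIJ : Disjoint I J) (hA : ∀ a ∈ A, a ⊆ I) (hB : ∀ b ∈ B, b ⊆ J) :
    #(famStar A B) = #A * #B := by
  rw [famStar, card_image_of_injOn, card_product]
  rintro ⟨a, b⟩ hab ⟨a', b'⟩ hab' h
  simp only [coe_product, Set.mem_prod, mem_coe] at hab hab' h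
  refine Prod.ext ?_ ?_
  · rw [← union_inter_eq_left_of_disjoint hIJ (hA _ hab.1) (hB _ hab.2), h,
      union_inter_eq_left_of_disjoint hIJ (hA _ hab'.1) (hB _ hab'.2)]
  · rw [← union_inter_eq_right_of_disjoint hIJ (hA _ hab.1) (hB _ hab.2), h,
      union_inter_eq_right_of_disjoint hIJ (hA _ hab'.1) (hB _ hab'.2)]

end FamStar

section Partition

def IsElementaryOn (I : Finset ℕ) (E : Finset (Finset ℕ)) : Prop :=
  ∃ L : List (Finset ℕ × ℕ), L ≠ [] ∧ (∀ p ∈ L, IsNatInterval p.1 ∧ p.1 ⊆ I ∧ p.2 ≤ 2) ∧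
    L.Pairwise (fun p q => Disjoint p.1 q.1) ∧ E = starList L

namespace IsElementaryOn

variable {I J : Finset ℕ} {E F : Finset (Finset ℕ)}

lemma isElementary (h : IsElementaryOn I E) : IsElementary E := by
  obtain ⟨L, hL, hLI, hdisj, rfl⟩ := h
  exact ⟨L, hL, fun p hp => ⟨(hLI p hp).1, (hLI p hp).2.2⟩, hdisj, rfl⟩

lemma subset_of_mem (h : IsElementaryOn I E) : ∀ X ∈ E, X ⊆ I := by
  obtain ⟨L, -, hLI, -, rfl⟩ := h
  induction L with
  | nil => simp_all [starList]
  | cons p L ih =>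
    intro X hX
    obtain ⟨a, ha, b, hb, rfl⟩ := mem_famStar.mp hX
    exact union_subset ((mem_powersetCard.mp ha).1.trans (hLI p (by simp)).2.1)
      (ih (fun q hq => hLI q (List.mem_cons_of_mem p hq)) b hb)

lemma famStar (hIJ : Disjoint I J) (hE : IsElementaryOn I E) (hF : IsElementaryOn J F) :
    IsElementaryOn (I ∪ J) (famStar E F) := by
  obtain ⟨L, hL, hLI, hLdisj, rfl⟩ := hE
  obtain ⟨M, -, hMJ, hMdisj, rfl⟩ := hF
  refine ⟨L ++ M, by simp [hL], ?_, ?_, (starList_append L M).symm⟩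
  · intro p hp
    rcases List.mem_append.mp hp with h | h
    · exact ⟨(hLI p h).1, (hLI p h).2.1.trans subset_union_left, (hLI p h).2.2⟩
    · exact ⟨(hMJ p h).1, (hMJ p h).2.1.trans subset_union_right, (hMJ p h).2.2⟩
  · exact List.pairwise_append.mpr ⟨hLdisj, hMdisj, fun p hp q hq =>
      disjoint_of_subset_left (hLI p hp).2.1 (disjoint_of_subset_right (hMJ q hq).2.1 hIJ)⟩

end IsElementaryOn

lemma isElementaryOn_powersetCard {I : Finset ℕ} (hI : IsNatInterval I) {k : ℕ} (hk : k ≤ 2) :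
    IsElementaryOn I (powersetCard k I) :=
  ⟨[(I, k)], by simp, by simpa using ⟨hI, hk⟩, by simp, by
    rw [starList, starList, famStar_singleton_empty]⟩

/-- Recording a common support `I` of all the intervals is what lets two partitions with disjoint
supports be multiplied (`HasElemPartition.famStar`). -/
def HasElemPartition (I : Finset ℕ) (A : Finset (Finset ℕ)) (s : ℝ) : Prop :=
  ∃ (ι : Type) (_ : Fintype ι) (E : ι → Finset (Finset ℕ)), (∀ i, IsElementaryOn I (E i)) ∧
    Pairwise (fun i j => Disjoint (E i) (E j)) ∧ univ.biUnion E = A ∧ ∑ i, √(#(E i) : ℝ) ≤ s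

namespace HasElemPartition

variable {I J : Finset ℕ} {A B : Finset (Finset ℕ)} {s t : ℝ}

lemma mono (h : HasElemPartition I A s) (hst : s ≤ t) : HasElemPartition I A t := by
  obtain ⟨ι, _, E, hE, hdisj, hA, hs⟩ := h
  exact ⟨ι, _, E, hE, hdisj, hA, hs.trans hst⟩

lemma nonneg (h : HasElemPartition I A s) : 0 ≤ s := by
  obtain ⟨ι, _, E, -, -, -, hs⟩ := h
  exact (sum_nonneg fun i _ => Real.sqrt_nonneg _).trans hs

lemma of_isElementaryOn (h : IsElementaryOn I A) : HasElemPartition I A √(#A : ℝ) :=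
  ⟨Unit, inferInstance, fun _ => A, fun _ => h, fun i j hij => (hij rfl).elim, by simp, by simp⟩

lemma empty (I : Finset ℕ) : HasElemPartition I ∅ 0 :=
  ⟨Empty, inferInstance, Empty.elim, fun i => i.elim, fun i => i.elim, by simp, by simp⟩

lemma union (hAB : Disjoint A B) (hA : HasElemPartition I A s) (hB : HasElemPartition I B t) :
    HasElemPartition I (A ∪ B) (s + t) := by
  obtain ⟨ι, _, E, hE, hEdisj, rfl, hs⟩ := hA
  obtain ⟨κ, _, F, hF, hFdisj, rfl, ht⟩ := hB
  refine ⟨ι ⊕ κ, inferInstance, Sum.elim E F, fun | .inl i => hE i | .inr j => hF j, ?_, ?_, ?_⟩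
  · rintro (i | j) (i' | j') hne
    · exact hEdisj fun h => hne (h ▸ rfl)
    · exact hAB.mono (subset_biUnion_of_mem E (mem_univ i))
        (subset_biUnion_of_mem F (mem_univ j'))
    · exact hAB.symm.mono (subset_biUnion_of_mem F (mem_univ j))
        (subset_biUnion_of_mem E (mem_univ i'))
    · exact hFdisj fun h => hne (h ▸ rfl)
  · ext X
    simp [Sum.exists]
  · rw [Fintype.sum_sum_type]
    exact add_le_add hs ht

lemma biUnion {κ : Type*} [DecidableEq κ] (T : Finset κ) {A : κ → Finset (Finset ℕ)}
    {s : κ → ℝ} (hdisj : (T : Set κ).PairwiseDisjoint A)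
    (h : ∀ j, HasElemPartition I (A j) (s j)) :
    HasElemPartition I (T.biUnion A) (∑ j ∈ T, s j) := by
  induction T using Finset.induction_on with
  | empty => simpa using empty I
  | insert j T hj ih =>
    rw [biUnion_insert, sum_insert hj]
    refine union ?_ (h j) (ih (hdisj.subset (by simp)))
    exact (disjoint_biUnion_right _ _ _).mpr fun i hi =>
      hdisj (by simp) (by simp [hi]) fun hji => hj (hji ▸ hi)

lemma famStar (hIJ : Disjoint I J) (hA : HasElemPartition I A s) (hB : HasElemPartition J B t) :
    HasElemPartition (I ∪ J) (famStar A B) (s * t) := by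
  have hs0 := hA.nonneg
  obtain ⟨ι, _, E, hE, hEdisj, rfl, hs⟩ := hA
  obtain ⟨κ, _, F, hF, hFdisj, rfl, ht⟩ := hB
  refine ⟨ι × κ, inferInstance, fun p => _root_.famStar (E p.1) (F p.2),
    fun p => (hE p.1).famStar hIJ (hF p.2), ?_, ?_, ?_⟩
  · rintro ⟨i, j⟩ ⟨i', j'⟩ hne
    refine disjoint_left.mpr fun X hX hX' => ?_
    obtain ⟨hXi, hXj⟩ :=
      inter_mem_of_mem_famStar hIJ (hE i).subset_of_mem (hF j).subset_of_mem hX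
    obtain ⟨hXi', hXj'⟩ :=
      inter_mem_of_mem_famStar hIJ (hE i').subset_of_mem (hF j').subset_of_mem hX'
    have hi : i = i' := by_contra fun h => disjoint_left.mp (hEdisj h) hXi hXi'
    have hj : j = j' := by_contra fun h => disjoint_left.mp (hFdisj h) hXj hXj'
    exact hne (by rw [hi, hj])
  · rw [famStar_biUnion_biUnion, univ_product_univ]
  · calc ∑ p : ι × κ, √(#(_root_.famStar (E p.1) (F p.2)) : ℝ)
          = (∑ i, √(#(E i) : ℝ)) * ∑ j, √(#(F j) : ℝ) := by
            rw [Fintype.sum_mul_sum, Fintype.sum_prod_type]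
            simp only [card_famStar hIJ (hE _).subset_of_mem (hF _).subset_of_mem, Nat.cast_mul,
              Real.sqrt_mul (Nat.cast_nonneg _)]
      _ ≤ s * t := mul_le_mul hs ht (sum_nonneg fun _ _ => Real.sqrt_nonneg _) hs0

lemma exists_isElemPartition (h : HasElemPartition I A s) :
    ∃ (N : ℕ) (E : Fin N → Finset (Finset ℕ)),
      IsElemPartition A E ∧ ∑ i, √(#(E i) : ℝ) ≤ s := by
  obtain ⟨ι, _, E, hE, hdisj, rfl, hs⟩ := h
  let e := Fintype.equivFin ι
  refine ⟨Fintype.card ι, E ∘ e.symm, ⟨fun i => (hE _).isElementary,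
    fun i j hij => hdisj (e.symm.injective.ne hij), ?_⟩, ?_⟩
  · ext X
    simp only [mem_biUnion, mem_univ, true_and, Function.comp_apply]
    exact (e.symm.surjective.exists (p := fun i => X ∈ E i)).symm
  · rwa [← e.symm.sum_comp] at hs

end HasElemPartition

end Partition

section Split

variable {L R : Finset ℕ}

lemma mem_famStar_powersetCard (hLR : Disjoint L R) {i j : ℕ} {X : Finset ℕ} :
    X ∈ famStar (powersetCard i L) (powersetCard j R) ↔
      X ⊆ L ∪ R ∧ #(X ∩ L) = i ∧ #(X ∩ R) = j := by
  constructor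
  · intro hX
    obtain ⟨a, ha, b, hb, rfl⟩ := mem_famStar.mp hX
    rw [mem_powersetCard] at ha hb
    rw [union_inter_eq_left_of_disjoint hLR ha.1 hb.1,
      union_inter_eq_right_of_disjoint hLR ha.1 hb.1]
    exact ⟨union_subset_union ha.1 hb.1, ha.2, hb.2⟩
  · rintro ⟨hX, hi, hj⟩
    refine mem_famStar.mpr ⟨X ∩ L, mem_powersetCard.mpr ⟨inter_subset_right, hi⟩,
      X ∩ R, mem_powersetCard.mpr ⟨inter_subset_right, hj⟩, ?_⟩
    rw [← inter_union_distrib_left, inter_eq_left.mpr hX]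

lemma powersetCard_union_eq_biUnion (hLR : Disjoint L R) (k : ℕ) :
    powersetCard k (L ∪ R) =
      (range (k + 1)).biUnion fun j => famStar (powersetCard j L) (powersetCard (k - j) R) := by
  ext X
  simp only [mem_powersetCard, mem_biUnion, mem_range, mem_famStar_powersetCard hLR]
  have hcard (hX : X ⊆ L ∪ R) : #(X ∩ L) + #(X ∩ R) = #X := by
    rw [← card_union_of_disjoint (hLR.mono inter_subset_right inter_subset_right),
      ← inter_union_distrib_left, inter_eq_left.mpr hX]
  constructor
  · rintro ⟨hX, hk⟩
    have := hcard hX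
    exact ⟨#(X ∩ L), by omega, hX, rfl, by omega⟩
  · rintro ⟨j, hj, hX, hL, hR⟩
    exact ⟨hX, by have := hcard hX; omega⟩

lemma pairwiseDisjoint_famStar_powersetCard (hLR : Disjoint L R) (k : ℕ) :
    (range (k + 1) : Set ℕ).PairwiseDisjoint
      fun j => famStar (powersetCard j L) (powersetCard (k - j) R) :=
  fun _ _ _ _ hij => disjoint_left.mpr fun _ hi hj =>
    hij (((mem_famStar_powersetCard hLR).mp hi).2.1.symm.trans
      ((mem_famStar_powersetCard hLR).mp hj).2.1)

end Split

section Binomial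

lemma two_pow_mul_choose_le_of_two_mul_le {m n : ℕ} (h : 2 * m ≤ n) (k : ℕ) :
    2 ^ k * m.choose k ≤ n.choose k := by
  induction k with
  | zero => simp
  | succ k ih =>
    refine Nat.le_of_mul_le_mul_right ?_ k.succ_pos
    calc 2 ^ (k + 1) * m.choose (k + 1) * (k + 1) = 2 ^ k * m.choose k * (2 * (m - k)) := by
          rw [mul_assoc, Nat.choose_succ_right_eq]; ring
      _ ≤ n.choose k * (n - k) := Nat.mul_le_mul ih (by omega)
      _ = n.choose (k + 1) * (k + 1) := (Nat.choose_succ_right_eq n k).symm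

lemma two_pow_mul_choose_succ_le_of_two_mul_le_succ {m n : ℕ} (h : 2 * m ≤ n + 1) (k : ℕ) :
    2 ^ k * m.choose (k + 1) ≤ n.choose (k + 1) := by
  obtain _ | m := m
  · simp
  obtain _ | n := n
  · omega
  refine Nat.le_of_mul_le_mul_right ?_ k.succ_pos
  calc 2 ^ k * (m + 1).choose (k + 1) * (k + 1) = (m + 1) * (2 ^ k * m.choose k) := by
        rw [mul_assoc, ← Nat.add_one_mul_choose_eq]; ring
    _ ≤ (n + 1) * n.choose k :=
        Nat.mul_le_mul (by omega) (two_pow_mul_choose_le_of_two_mul_le (by omega) k)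
    _ = (n + 1).choose (k + 1) * (k + 1) := Nat.add_one_mul_choose_eq n k

lemma choose_mul_choose_le_choose_add (l r i j : ℕ) :
    l.choose i * r.choose j ≤ (l + r).choose (i + j) := by
  rw [Nat.add_choose_eq]
  exact single_le_sum (f := fun p : ℕ × ℕ => l.choose p.1 * r.choose p.2)
    (fun _ _ => Nat.zero_le _) (a := (i, j)) (mem_antidiagonal.mpr rfl)

lemma sqrt_choose_mul_sqrt_choose_le (l r i j : ℕ) :
    √(l.choose i : ℝ) * √(r.choose j : ℝ) ≤ √((l + r).choose (i + j) : ℝ) := by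
  rw [← Real.sqrt_mul (Nat.cast_nonneg _)]
  exact Real.sqrt_le_sqrt (by exact_mod_cast choose_mul_choose_le_choose_add l r i j)

lemma sqrt_choose_le_of_two_mul_le {m n k : ℕ} (h : 2 * m ≤ n) (hk : 3 ≤ k) :
    √(m.choose k : ℝ) ≤ 3 / 8 * √(n.choose k : ℝ) := by
  have h8 : 8 * m.choose k ≤ n.choose k :=
    (Nat.mul_le_mul_right _ (Nat.pow_le_pow_right two_pos hk)).trans
      (two_pow_mul_choose_le_of_two_mul_le h k)
  have h8' : 8 * (m.choose k : ℝ) ≤ n.choose k := by exact_mod_cast h8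
  refine Real.sqrt_le_iff.mpr ⟨by positivity, ?_⟩
  rw [mul_pow, Real.sq_sqrt (Nat.cast_nonneg _)]
  linarith

lemma sqrt_choose_le_of_two_mul_le_succ {m n k : ℕ} (h : 2 * m ≤ n + 1) (hk : 3 ≤ k) :
    √(m.choose k : ℝ) ≤ 1 / 2 * √(n.choose k : ℝ) := by
  obtain ⟨k, rfl⟩ : ∃ k', k = k' + 1 := ⟨k - 1, by omega⟩
  have h4 : 4 * m.choose (k + 1) ≤ n.choose (k + 1) :=
    (Nat.mul_le_mul_right _ (Nat.pow_le_pow_right two_pos (by omega : 2 ≤ k))).trans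
      (two_pow_mul_choose_succ_le_of_two_mul_le_succ h k)
  have h4' : 4 * (m.choose (k + 1) : ℝ) ≤ n.choose (k + 1) := by exact_mod_cast h4
  refine Real.sqrt_le_iff.mpr ⟨by positivity, ?_⟩
  rw [mul_pow, Real.sq_sqrt (Nat.cast_nonneg _)]
  linarith

end Binomial

section Weight

noncomputable def weight : ℕ → ℝ
  | 0 => 1
  | k + 1 => 8 ^ k * catalan k

lemma weight_zero : weight 0 = 1 := rfl

lemma weight_nonneg (k : ℕ) : 0 ≤ weight k := by
  cases k <;> simp only [weight] <;> positivity

lemma one_le_weight {k : ℕ} (hk : k ≤ 2) : 1 ≤ weight k := by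
  interval_cases k <;> simp [weight]

lemma weight_succ_le (k : ℕ) : weight (k + 1) ≤ 32 ^ k := by
  have hcat : (catalan k : ℝ) ≤ 4 ^ k := by
    rw [catalan_eq_centralBinom_div]
    exact_mod_cast (Nat.div_le_self _ _).trans (Nat.centralBinom_le_four_pow k)
  calc weight (k + 1) = 8 ^ k * catalan k := rfl
    _ ≤ 8 ^ k * 4 ^ k := by gcongr
    _ = 32 ^ k := by rw [← mul_pow]; norm_num

lemma sum_weight_mul_weight (m : ℕ) :
    ∑ j ∈ range (m + 1), weight (j + 1) * weight (m + 2 - (j + 1)) = weight (m + 2) / 8 := by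
  have hterm : ∀ j ∈ range (m + 1), weight (j + 1) * weight (m + 2 - (j + 1)) =
      8 ^ m * (catalan j * catalan (m - j) : ℕ) := by
    intro j hj
    obtain ⟨i, rfl⟩ : ∃ i, m = j + i := ⟨m - j, by simp at hj; omega⟩
    rw [show j + i + 2 - (j + 1) = i + 1 by omega, Nat.add_sub_cancel_left]
    simp only [weight, pow_add]
    push_cast
    ring
  rw [sum_congr rfl hterm, ← mul_sum, ← Nat.cast_sum, ← Fin.sum_univ_eq_sum_range
    (fun j => catalan j * catalan (m - j)), ← catalan_succ]
  simp only [weight, pow_succ]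
  ring

lemma sum_weight_mul_sqrt_choose_le {l r k : ℕ} (hrl : r ≤ l) (hlr : l ≤ r + 1) (hk : 3 ≤ k) :
    ∑ j ∈ range (k + 1),
        weight j * √(l.choose j : ℝ) * (weight (k - j) * √(r.choose (k - j) : ℝ))
      ≤ weight k * √((l + r).choose k : ℝ) := by
  obtain ⟨m, rfl⟩ : ∃ m, k = m + 2 := ⟨k - 2, by omega⟩
  set C := √((l + r).choose (m + 2) : ℝ)
  have hw := weight_nonneg (m + 2)
  have hfirst : √(r.choose (m + 2) : ℝ) ≤ 3 / 8 * C :=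
    sqrt_choose_le_of_two_mul_le (by omega) hk
  have hlast : √(l.choose (m + 2) : ℝ) ≤ 1 / 2 * C :=
    sqrt_choose_le_of_two_mul_le_succ (by omega) hk
  have hmiddle : ∀ j ∈ range (m + 1),
      weight (j + 1) * √(l.choose (j + 1) : ℝ) *
          (weight (m + 2 - (j + 1)) * √(r.choose (m + 2 - (j + 1)) : ℝ))
        ≤ weight (j + 1) * weight (m + 2 - (j + 1)) * C := by
    intro j hj
    have := sqrt_choose_mul_sqrt_choose_le l r (j + 1) (m + 2 - (j + 1))
    rw [show j + 1 + (m + 2 - (j + 1)) = m + 2 by simp at hj; omega] at this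
    calc _ = weight (j + 1) * weight (m + 2 - (j + 1)) *
          (√(l.choose (j + 1) : ℝ) * √(r.choose (m + 2 - (j + 1)) : ℝ)) := by ring
      _ ≤ _ := mul_le_mul_of_nonneg_left this
          (mul_nonneg (weight_nonneg _) (weight_nonneg _))
  rw [sum_range_succ, sum_range_succ']
  have hmid := sum_le_sum hmiddle
  rw [← sum_mul, sum_weight_mul_weight] at hmid
  simp only [weight_zero, Nat.choose_zero_right, Nat.cast_one, Real.sqrt_one, Nat.sub_zero,
    Nat.sub_self, one_mul, mul_one]
  linarith [mul_le_mul_of_nonneg_left hfirst hw, mul_le_mul_of_nonneg_left hlast hw]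

end Weight

lemma isNatInterval_Ico (a b : ℕ) : IsNatInterval (Ico a b) := by
  intro x hx y hy c hxc hcy
  simp only [mem_Ico] at *
  omega

lemma hasElemPartition_powersetCard_Ico (n a k : ℕ) :
    HasElemPartition (Ico a (a + n)) (powersetCard k (Ico a (a + n)))
      (weight k * √(n.choose k : ℝ)) := by
  induction n using Nat.strong_induction_on generalizing a k with
  | _ n ih =>
  have hcard : #(Ico a (a + n)) = n := by simp
  rcases le_or_gt k 2 with hk | hk
  · refine (HasElemPartition.of_isElementaryOn
      (isElementaryOn_powersetCard (isNatInterval_Ico a (a + n)) hk)).mono ?_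
    rw [card_powersetCard, hcard]
    exact le_mul_of_one_le_left (Real.sqrt_nonneg _) (one_le_weight hk)
  rcases lt_or_ge n k with hnk | hkn
  · rw [powersetCard_eq_empty.mpr (by rwa [hcard]), Nat.choose_eq_zero_of_lt hnk]
    exact (HasElemPartition.empty _).mono (by simp)
  set l := (n + 1) / 2
  set r := n / 2
  have hlr : l + r = n := by omega
  have hdisj := Ico_disjoint_Ico_consecutive a (a + l) (a + l + r)
  rw [← hlr, ← add_assoc, ← Ico_union_Ico_eq_Ico (b := a + l) (by omega) (by omega),
    powersetCard_union_eq_biUnion hdisj]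
  refine (HasElemPartition.biUnion _ (pairwiseDisjoint_famStar_powersetCard hdisj k) fun j =>
    (ih l (by omega) a j).famStar hdisj (ih r (by omega) (a + l) (k - j))).mono ?_
  exact sum_weight_mul_sqrt_choose_le (by omega) (by omega) (by omega)

section Estimates

open Real

lemma pow_self_div_factorial_le {k : ℕ} (hk : k ≠ 0) :
    (k : ℝ) ^ k / k.factorial ≤ exp k / 2 := by
  have hstirling := Stirling.le_factorial_stirling k
  rw [div_pow, exp_one_pow] at hstirling
  have h2 : 2 ≤ √(2 * π * k) := by
    refine Real.le_sqrt_of_sq_le ?_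
    have : (1 : ℝ) ≤ k := by exact_mod_cast Nat.one_le_iff_ne_zero.mpr hk
    nlinarith [pi_gt_three]
  rw [div_le_div_iff₀ (by positivity) two_pos]
  calc (k : ℝ) ^ k * 2 = exp k * (2 * (k ^ k / exp k)) := by field_simp
    _ ≤ exp k * k.factorial := by
        gcongr
        exact (mul_le_mul_of_nonneg_right h2 (by positivity)).trans hstirling

lemma natCast_mul_exp_le {k : ℕ} (hk : 1 ≤ k) :
    (k : ℝ) * exp k ≤ 2 ^ (k + 1) * 3 ^ (k - 1) := by
  obtain ⟨j, rfl⟩ : ∃ j, k = j + 1 := ⟨k - 1, by omega⟩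
  have hj : ((j + 1 : ℕ) : ℝ) ≤ 2 ^ j := by exact_mod_cast Nat.lt_two_pow_self
  have he3 : exp (j : ℝ) ≤ 3 ^ j := by
    rw [← exp_one_pow]
    exact pow_le_pow_left₀ (exp_pos 1).le (by linarith [exp_one_lt_d9]) j
  calc ((j + 1 : ℕ) : ℝ) * exp (j + 1 : ℕ) = ((j + 1 : ℕ) : ℝ) * exp j * exp 1 := by
        push_cast; rw [exp_add]; ring
    _ ≤ 2 ^ j * 3 ^ j * 4 := by gcongr; linarith [exp_one_lt_d9]
    _ = 2 ^ (j + 1 + 1) * 3 ^ (j + 1 - 1) := by rw [Nat.add_sub_cancel]; ring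

lemma natCast_mul_choose_le (n : ℕ) {k : ℕ} (hk : 1 ≤ k) :
    (k : ℝ) * n.choose k ≤ 3 ^ (k - 1) * (2 * n / k) ^ k := by
  have hk0 : (k : ℝ) ≠ 0 := by positivity
  calc (k : ℝ) * n.choose k ≤ k * (n ^ k / k.factorial) := by
        gcongr; exact Nat.choose_le_pow_div k n
    _ = k * (k ^ k / k.factorial) * (n / k) ^ k := by
        rw [div_pow]; field_simp
    _ ≤ k * (exp k / 2) * (n / k) ^ k := by
        gcongr (k : ℝ) * ?_ * _; exact pow_self_div_factorial_le (by omega)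
    _ = k * exp k / 2 ^ (k + 1) * (2 * n / k) ^ k := by
        rw [mul_div_assoc 2, mul_pow]; field_simp; ring
    _ ≤ 3 ^ (k - 1) * (2 * n / k) ^ k := by
        gcongr
        rw [div_le_iff₀ (by positivity), mul_comm (3 ^ _)]
        exact natCast_mul_exp_le hk

end Estimates

lemma weight_mul_sqrt_choose_le (n : ℕ) {k : ℕ} (hk : 1 ≤ k) :
    weight k * √(n.choose k : ℝ) ≤
      ((2 + √2) * 32) ^ (k - 1) / √k * (2 * (n : ℝ) / k) ^ ((k : ℝ) / 2) := by
  set M := (2 + √2) * 32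
  set x := 2 * (n : ℝ) / k
  have hx : 0 ≤ x := by positivity
  have hM : 3072 ≤ M ^ 2 := by nlinarith [Real.sqrt_nonneg 2]
  have hw : weight k ≤ 32 ^ (k - 1) := by
    obtain ⟨j, rfl⟩ : ∃ j, k = j + 1 := ⟨k - 1, by omega⟩
    exact weight_succ_le j
  have hrpow : x ^ ((k : ℝ) / 2) = √(x ^ k) := by
    rw [Real.sqrt_eq_rpow, ← Real.rpow_natCast, ← Real.rpow_mul hx]
    ring_nf
  have hk0 : (0 : ℝ) < k := by positivity
  rw [hrpow, ← pow_le_pow_iff_left₀ (mul_nonneg (weight_nonneg k) (Real.sqrt_nonneg _))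
    (by positivity) two_ne_zero, mul_pow, div_mul_eq_mul_div, div_pow, mul_pow,
    Real.sq_sqrt (Nat.cast_nonneg _), Real.sq_sqrt hk0.le, Real.sq_sqrt (by positivity), le_div_iff₀ hk0, ← pow_right_comm]
  calc weight k ^ 2 * n.choose k * k = weight k ^ 2 * (k * n.choose k) := by ring
    _ ≤ (32 ^ (k - 1)) ^ 2 * (3 ^ (k - 1) * x ^ k) := by
        gcongr ?_ * ?_
        · exact pow_le_pow_left₀ (weight_nonneg k) hw 2
        · exact natCast_mul_choose_le n hk
    _ = 3072 ^ (k - 1) * x ^ k := by rw [← pow_right_comm, ← mul_assoc, ← mul_pow]; norm_num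
    _ ≤ (M ^ 2) ^ (k - 1) * x ^ k := by gcongr

theorem efficient_elementary_partition :
    ∃ c : ℝ, 1 ≤ c ∧ ∀ n k : ℕ, 1 ≤ n → 1 ≤ k →
      ∃ (N : ℕ) (E : Fin N → Finset (Finset ℕ)),
        IsElemPartition (Finset.powersetCard k (Finset.Icc 1 n)) E ∧
          ∑ i, Real.sqrt ((E i).card) ≤
            ((2 + Real.sqrt 2) * c) ^ (k - 1) / Real.sqrt k *
              (2 * (n : ℝ) / k) ^ ((k : ℝ) / 2) := by
  refine ⟨32, by norm_num, fun n k _ hk => ?_⟩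
  have hIcc : Icc 1 n = Ico 1 (1 + n) := by ext; simp; omega
  obtain ⟨N, E, hE, hsum⟩ :=
    (hasElemPartition_powersetCard_Ico n 1 k).exists_isElemPartition
  exact ⟨N, E, hIcc ▸ hE, hsum.trans (weight_mul_sqrt_choose_le n hk)⟩
end

section
/- For all positive integers m, k, the function Λ_{m,k} is continuous, monotonically increasing, and concave on [0,1]. -/
/-!
On `(0, 1/m]` one has `Λ(p) = p t^{k/2}` with `t = L - (log m + log p)/k`, `L = log (e m)`, and
on `(1/m, 1]` one has `Λ(p) = p u^{1/2} L^{(k-1)/2}` with `u = 1 - log p`. Both are instances of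
`p ↦ p (c - log p / K)^{K/2}`, whose derivative is `t^{K/2-1} (t - 1/2)` at `t = c - log p / K`;
this is nonnegative and nondecreasing in `t` for `t ≥ 1/2`, and `t` decreases with `p`. At
`p = 1/m` both `t` and `u` equal `L`, where the two pieces have the same value and the same
derivative, so `Λ` has a nonnegative antitone derivative on `(0, 1]`. Continuity at `0` reduces
to `p^{2/K} log p → 0`.
-/

open Real

/-- The function `Λ_{m,k}` from the paper (extended by `0` to `p ≤ 0`). -/
noncomputable def Lam (m k : ℕ) (p : ℝ) : ℝ :=
  if p ≤ 0 then 0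
  else if p ≤ 1 / (m : ℝ) then
    p * ((1 / (k : ℝ)) * Real.log (Real.exp k * (m : ℝ) ^ (k - 1) / p)) ^ ((k : ℝ) / 2)
  else
    p * Real.sqrt (Real.log (Real.exp 1 / p)) *
      Real.log (Real.exp 1 * m) ^ (((k : ℝ) - 1) / 2)

open Set Filter Topology

noncomputable def logPow (K c p : ℝ) : ℝ := p * (c - log p / K) ^ (K / 2)

noncomputable def logPowDeriv (K t : ℝ) : ℝ := t ^ (K / 2 - 1) * (t - 1 / 2)

section logPow

variable {K c p s t : ℝ}

theorem hasDerivAt_logPow (hK : K ≠ 0) (hp : 0 < p) (ht : c - log p / K ≠ 0) :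
    HasDerivAt (logPow K c) (logPowDeriv K (c - log p / K)) p := by
  have hlog : HasDerivAt (fun q => c - log q / K) (-(p⁻¹ / K)) p :=
    ((hasDerivAt_log hp.ne').div_const K).const_sub c
  refine ((hasDerivAt_id' p).mul (hlog.rpow_const (p := K / 2) (Or.inl ht))).congr_deriv ?_
  rw [logPowDeriv, rpow_sub_one ht]
  generalize c - log p / K = t at ht ⊢
  field_simp
  ring

theorem logPowDeriv_nonneg (ht : 1 / 2 ≤ t) : 0 ≤ logPowDeriv K t :=
  mul_nonneg (rpow_nonneg (by linarith) _) (by linarith)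

theorem monotoneOn_logPowDeriv (hK : 0 ≤ K) : MonotoneOn (logPowDeriv K) (Ici (1 / 2)) := by
  intro s hs t ht hst
  simp only [mem_Ici] at hs ht
  have hs0 : 0 < s := by linarith
  rcases le_total 0 (K / 2 - 1) with ha | ha
  · exact mul_le_mul (rpow_le_rpow hs0.le hst ha) (by linarith) (by linarith)
      (rpow_nonneg (by linarith) _)
  · -- `t ^ a * (t - 1/2) = t ^ (a + 1) - t ^ a / 2`, and both terms increase when `-1 ≤ a ≤ 0`
    have expand : ∀ x, 0 < x → logPowDeriv K x = x ^ (K / 2 - 1 + 1) - x ^ (K / 2 - 1) / 2 := by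
      intro x hx
      rw [logPowDeriv, rpow_add_one hx.ne']
      ring
    rw [expand s hs0, expand t (by linarith)]
    have h1 := rpow_le_rpow hs0.le hst (by linarith : 0 ≤ K / 2 - 1 + 1)
    have h2 := rpow_le_rpow_of_nonpos hs0 hst ha
    linarith

theorem logPowDeriv_add (ht : 0 < t) (K J : ℝ) :
    logPowDeriv (K + J) t = logPowDeriv K t * t ^ (J / 2) := by
  rw [logPowDeriv, logPowDeriv, show (K + J) / 2 - 1 = K / 2 - 1 + J / 2 by ring, rpow_add ht]
  ring

theorem tendsto_logPow_nhdsGT_zero (hK : 0 < K) :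
    Tendsto (logPow K c) (𝓝[>] 0) (𝓝 0) := by
  have hpow : Tendsto (fun p : ℝ => p ^ (2 / K)) (𝓝[>] 0) (𝓝 0) := by
    have := (continuousAt_rpow_const 0 (2 / K) (Or.inr (by positivity))).tendsto
    rw [zero_rpow (by positivity)] at this
    exact this.mono_left nhdsWithin_le_nhds
  have hbase : Tendsto (fun p => (p ^ (2 / K) * (c - log p / K))) (𝓝[>] 0) (𝓝 0) := by
    have := (hpow.const_mul c).sub ((tendsto_log_mul_rpow_nhdsGT_zero (r := 2 / K)
      (by positivity)).div_const K)
    simp only [mul_zero, zero_div, sub_zero] at this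
    refine this.congr fun p => ?_
    ring
  have hlim := ((continuousAt_rpow_const 0 (K / 2) (Or.inr (by positivity))).tendsto.comp hbase)
  rw [zero_rpow (by positivity)] at hlim
  -- `p * t ^ (K/2) = (p ^ (2/K) * t) ^ (K/2)` once `t = c - log p / K` is nonnegative
  refine hlim.congr' ?_
  filter_upwards [Ioo_mem_nhdsGT (exp_pos (c * K))] with p hp
  have ht : 0 ≤ c - log p / K := by
    have := (log_lt_iff_lt_exp hp.1).2 hp.2
    rw [sub_nonneg, div_le_iff₀ hK]
    linarith
  simp only [Function.comp_apply, logPow]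
  rw [mul_rpow (rpow_nonneg hp.1.le _) ht, ← rpow_mul hp.1.le,
    show 2 / K * (K / 2) = 1 by field_simp, rpow_one]

end logPow

theorem HasDerivAt.of_eventuallyEq_nhdsLE_nhdsGT {f g h : ℝ → ℝ} {a d : ℝ}
    (hg : HasDerivAt g d a) (hh : HasDerivAt h d a) (hfg : f =ᶠ[𝓝[≤] a] g)
    (hfh : f =ᶠ[𝓝[>] a] h) (hgh : g a = h a) : HasDerivAt f d a := by
  have hfa : f a = g a := hfg.eq_of_nhdsWithin self_mem_Iic
  have hleft : HasDerivWithinAt f d (Iic a) a := hg.hasDerivWithinAt.congr_of_eventuallyEq hfg hfa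
  have hright : HasDerivWithinAt f d (Ioi a) a :=
    hh.hasDerivWithinAt.congr_of_eventuallyEq hfh (hfa.trans hgh)
  have := hleft.union hright.Ici_of_Ioi
  rwa [Iic_union_Ici, hasDerivWithinAt_univ] at this

theorem one_le_log_exp_one_mul {x : ℝ} (hx : 1 ≤ x) : 1 ≤ log (exp 1 * x) := by
  rw [log_mul (exp_pos 1).ne' (by positivity), log_exp]
  linarith [log_nonneg hx]

section Lam

variable {m k : ℕ} {p : ℝ}

theorem Lam_eq_logPow (hm : 1 ≤ m) (hk : 1 ≤ k) (hp : 0 < p) (hpm : p ≤ 1 / m) :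
    Lam m k p = logPow k (log (exp 1 * m) - log m / k) p := by
  have hm0 : (0 : ℝ) < m := by exact_mod_cast hm
  have hk0 : (k : ℝ) ≠ 0 := by positivity
  rw [Lam, if_neg hp.not_ge, if_pos hpm, logPow, log_div (by positivity) hp.ne',
    log_mul (exp_pos _).ne' (by positivity), log_mul (exp_pos _).ne' hm0.ne', log_exp, log_exp,
    log_pow, Nat.cast_sub hk]
  field_simp
  ring_nf

theorem Lam_eq_logPow_mul (hp : 1 / (m : ℝ) < p) :
    Lam m k p = logPow 1 1 p * log (exp 1 * m) ^ (((k : ℝ) - 1) / 2) := by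
  have hp0 : 0 < p := lt_of_le_of_lt (by positivity) hp
  rw [Lam, if_neg hp0.not_ge, if_neg hp.not_ge, logPow, log_div (exp_pos 1).ne' hp0.ne', log_exp,
    sqrt_eq_rpow, div_one]

theorem log_exp_one_mul_le_of_le_inv {K : ℝ} (hK : 0 ≤ K) (hm : 1 ≤ m) (hp : 0 < p)
    (hpm : p ≤ 1 / m) : log (exp 1 * m) ≤ log (exp 1 * m) - log m / K - log p / K := by
  have hm0 : (0 : ℝ) < m := by exact_mod_cast hm
  have hmp : log (m * p) ≤ 0 := log_nonpos (by positivity) (by rwa [le_div_iff₀' hm0] at hpm)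
  rw [log_mul hm0.ne' hp.ne'] at hmp
  have : 0 ≤ -(log m + log p) / K := div_nonneg (by linarith) hK
  linarith [show -(log m + log p) / K = -(log m / K) - log p / K by ring]

theorem one_sub_log_le_log_exp_one_mul (hm : 1 ≤ m) (hpm : 1 / m ≤ p) :
    1 - log p ≤ log (exp 1 * m) := by
  have hm0 : (0 : ℝ) < m := by exact_mod_cast hm
  have := log_le_log (by positivity) hpm
  rw [one_div, log_inv] at this
  rw [log_mul (exp_pos 1).ne' hm0.ne', log_exp]
  linarith

noncomputable def derivLam (m k : ℕ) (p : ℝ) : ℝ :=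
  if p ≤ 1 / m then logPowDeriv k (log (exp 1 * m) - log m / k - log p / k)
  else logPowDeriv 1 (1 - log p) * log (exp 1 * m) ^ (((k : ℝ) - 1) / 2)

theorem hasDerivAt_Lam (hm : 1 ≤ m) (hk : 1 ≤ k) (hp : 0 < p) (hp1 : p ≤ 1) :
    HasDerivAt (Lam m k) (derivLam m k p) p := by
  have hm0 : (0 : ℝ) < m := by exact_mod_cast hm
  set L := log (exp 1 * m) with hL_def
  have hL : 1 ≤ L := one_le_log_exp_one_mul (by exact_mod_cast hm)
  have hL_eq : L = 1 + log m := by rw [hL_def, log_mul (exp_pos 1).ne' hm0.ne', log_exp]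
  have hk0 : (k : ℝ) ≠ 0 := by positivity
  have hleft : ∀ {q : ℝ}, 0 < q → q ≤ 1 / m →
      HasDerivAt (logPow k (L - log m / k)) (derivLam m k q) q := fun hq hqm => by
    rw [derivLam, if_pos hqm]
    have := log_exp_one_mul_le_of_le_inv k.cast_nonneg hm hq hqm
    exact hasDerivAt_logPow hk0 hq (by linarith)
  have hright : ∀ {q : ℝ}, 0 < q → q ≤ 1 →
      HasDerivAt (fun q => logPow 1 1 q * L ^ (((k : ℝ) - 1) / 2))
        (logPowDeriv 1 (1 - log q) * L ^ (((k : ℝ) - 1) / 2)) q := fun hq hq1 => by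
    have := hasDerivAt_logPow one_ne_zero hq (c := 1) (by linarith [log_nonpos hq.le hq1])
    rw [div_one] at this
    exact this.mul_const _
  rcases lt_trichotomy p (1 / m) with hpm | rfl | hpm
  · refine (hleft hp hpm.le).congr_of_eventuallyEq ?_
    filter_upwards [Ioo_mem_nhds hp hpm] with q hq
    exact Lam_eq_logPow hm hk hq.1 hq.2.le
  · have ht : log (exp 1 * m) - log m / k - log (1 / m) / k = L := by
      rw [one_div, log_inv]; ring
    have hu : 1 - log (1 / (m : ℝ)) = L := by
      rw [one_div, log_inv, hL_eq]; ring
    refine (hleft hp le_rfl).of_eventuallyEq_nhdsLE_nhdsGT ((hright hp hp1).congr_deriv ?_) ?_ ?_ ?_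
    · rw [derivLam, if_pos le_rfl, ht, hu, ← logPowDeriv_add (by linarith)]
      ring_nf
    · filter_upwards [Ioc_mem_nhdsLE hp] with q hq
      exact Lam_eq_logPow hm hk hq.1 hq.2
    · filter_upwards [self_mem_nhdsWithin] with q hq
      exact Lam_eq_logPow_mul hq
    · simp only [logPow]
      rw [ht, div_one, hu, mul_assoc, ← rpow_add (by linarith)]
      ring_nf
  · rw [derivLam, if_neg hpm.not_ge]
    refine (hright hp hp1).congr_of_eventuallyEq ?_
    filter_upwards [Ioi_mem_nhds hpm] with q hq
    exact Lam_eq_logPow_mul hq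

theorem derivLam_nonneg (hm : 1 ≤ m) (hp : 0 < p) (hp1 : p ≤ 1) : 0 ≤ derivLam m k p := by
  have hL := one_le_log_exp_one_mul (x := m) (by exact_mod_cast hm)
  rw [derivLam]
  split_ifs with hpm
  · exact logPowDeriv_nonneg
      (by linarith [log_exp_one_mul_le_of_le_inv (K := k) k.cast_nonneg hm hp hpm])
  · exact mul_nonneg (logPowDeriv_nonneg (by linarith [log_nonpos hp.le hp1]))
      (rpow_nonneg (by linarith) _)

theorem antitoneOn_derivLam (hm : 1 ≤ m) : AntitoneOn (derivLam m k) (Ioc 0 1) := by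
  intro x hx y hy hxy
  have hL := one_le_log_exp_one_mul (x := m) (by exact_mod_cast hm)
  have hlog : log x ≤ log y := log_le_log hx.1 hxy
  have hu : 1 ≤ 1 - log y := by linarith [log_nonpos hy.1.le hy.2]
  have hLe : 0 ≤ log (exp 1 * m) ^ (((k : ℝ) - 1) / 2) := rpow_nonneg (by linarith) _
  have hmono := monotoneOn_logPowDeriv (K := k) k.cast_nonneg
  by_cases hym : y ≤ 1 / m
  · have hty := log_exp_one_mul_le_of_le_inv (K := k) k.cast_nonneg hm hy.1 hym
    have htxy : log (exp 1 * m) - log m / k - log y / k ≤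
        log (exp 1 * m) - log m / k - log x / k := by
      gcongr
    rw [derivLam, derivLam, if_pos (hxy.trans hym), if_pos hym]
    exact hmono (mem_Ici.2 (by linarith)) (mem_Ici.2 (by linarith)) htxy
  rw [derivLam, derivLam, if_neg hym]
  replace hym := (not_le.mp hym).le
  split_ifs with hxm
  · -- both pieces of the derivative equal `logPowDeriv k L` at the junction `L = log (e m)`
    have htx := log_exp_one_mul_le_of_le_inv (K := k) k.cast_nonneg hm hx.1 hxm
    calc logPowDeriv 1 (1 - log y) * log (exp 1 * m) ^ (((k : ℝ) - 1) / 2)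
        ≤ logPowDeriv 1 (log (exp 1 * m)) * log (exp 1 * m) ^ (((k : ℝ) - 1) / 2) :=
          mul_le_mul_of_nonneg_right (monotoneOn_logPowDeriv zero_le_one
            (mem_Ici.2 (by linarith)) (mem_Ici.2 (by linarith))
            (one_sub_log_le_log_exp_one_mul hm hym)) hLe
      _ = logPowDeriv k (log (exp 1 * m)) := by
          rw [← logPowDeriv_add (by linarith)]; ring_nf
      _ ≤ logPowDeriv k (log (exp 1 * m) - log m / k - log x / k) :=
          hmono (mem_Ici.2 (by linarith)) (mem_Ici.2 (by linarith)) htx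
  · exact mul_le_mul_of_nonneg_right (monotoneOn_logPowDeriv zero_le_one
      (mem_Ici.2 (by linarith)) (mem_Ici.2 (by linarith)) (by linarith)) hLe

theorem continuousOn_Lam (hm : 1 ≤ m) (hk : 1 ≤ k) : ContinuousOn (Lam m k) (Icc 0 1) := by
  intro p hp
  rcases hp.1.eq_or_lt with rfl | hp0
  · refine (continuousWithinAt_Ioi_iff_Ici.mp ?_).mono Icc_subset_Ici_self
    have hm0 : (0 : ℝ) < 1 / m := by
      have : (0 : ℝ) < m := by exact_mod_cast hm
      positivity
    rw [ContinuousWithinAt, show Lam m k 0 = 0 by simp [Lam]]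
    refine (tendsto_logPow_nhdsGT_zero (c := log (exp 1 * m) - log m / k)
      (Nat.cast_pos.2 hk)).congr' ?_
    filter_upwards [Ioo_mem_nhdsGT hm0] with q hq
    exact (Lam_eq_logPow hm hk hq.1 hq.2.le).symm
  · exact (hasDerivAt_Lam hm hk hp0 hp.2).continuousAt.continuousWithinAt

end Lam

theorem Lam_cont_monotone_concave (m k : ℕ) (hm : 1 ≤ m) (hk : 1 ≤ k) :
    ContinuousOn (Lam m k) (Set.Icc 0 1) ∧ MonotoneOn (Lam m k) (Set.Icc 0 1) ∧
      ConcaveOn ℝ (Set.Icc 0 1) (Lam m k) := by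
  have hcont := continuousOn_Lam hm hk
  have hderiv : ∀ p ∈ interior (Icc (0 : ℝ) 1), HasDerivAt (Lam m k) (derivLam m k p) p := by
    rw [interior_Icc]
    exact fun p hp => hasDerivAt_Lam hm hk hp.1 hp.2.le
  have hdiff : DifferentiableOn ℝ (Lam m k) (interior (Icc 0 1)) := fun p hp =>
    (hderiv p hp).differentiableAt.differentiableWithinAt
  refine ⟨hcont, monotoneOn_of_hasDerivWithinAt_nonneg (convex_Icc 0 1) hcont
    (fun p hp => (hderiv p hp).hasDerivWithinAt) ?_,
    AntitoneOn.concaveOn_of_deriv (convex_Icc 0 1) hcont hdiff ?_⟩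
  all_goals rw [interior_Icc] at hderiv ⊢
  · exact fun p hp => derivLam_nonneg hm hp.1 hp.2.le
  · intro x hx y hy hxy
    rw [(hderiv x hx).deriv, (hderiv y hy).deriv]
    exact antitoneOn_derivLam hm (Ioo_subset_Ioc_self hx) (Ioo_subset_Ioc_self hy) hxy
end

section
/- For positive integers m, k and all p ∈ (0,1], Λ_{m,k}(p) equals p times the maximum of Π_{i=1}^{k} √(ln(e·xᵢ)) over all reals x₁,...,x_k ≥ 1 satisfying x₁x₂⋯xᵢ ≤ m^{i-1}/p for each i = 1,...,k. -/
/-!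
Write `y i = log (e * x i) = 1 + log (x i) ≥ 1`; the constraints bound the partial sums of the
`log (x i)`, and one maximises `∏ y i`. Everything rests on the tangent-line form of AM–GM:
`∏ y ≤ ∏ z` as soon as `∑ y i / z i ≤ k`. For `p ≤ 1/m` only the last constraint matters: it bounds
`∑ y`, and the constant profile with that sum is feasible. For `p > 1/m` the first constraint also
bites, `y 0 ≤ a := 1 - log p ≤ b := 1 + log m`, and the profile `(a, b, …, b)`, attained by
`x = (1/p, m, …, m)`, is optimal.
-/

open Real

open Finset

lemma prod_le_prod_of_sum_div_le_card {ι : Type*} {s : Finset ι} {y z : ι → ℝ}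
    (hy : ∀ i ∈ s, 0 < y i) (hz : ∀ i ∈ s, 0 < z i) (h : ∑ i ∈ s, y i / z i ≤ #s) :
    ∏ i ∈ s, y i ≤ ∏ i ∈ s, z i := by
  have hratio : ∏ i ∈ s, y i / z i ≤ 1 := calc
    ∏ i ∈ s, y i / z i ≤ ∏ i ∈ s, exp (y i / z i - 1) :=
      prod_le_prod (fun i hi => (div_pos (hy i hi) (hz i hi)).le) fun i _ => by
        linarith [add_one_le_exp (y i / z i - 1)]
    _ = exp (∑ i ∈ s, y i / z i - #s) := by simp [← exp_sum, sum_sub_distrib]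
    _ ≤ 1 := exp_le_one_iff.2 (by linarith)
  rwa [prod_div_distrib, div_le_one (prod_pos hz)] at hratio

lemma prod_le_pow_card_of_sum_le {ι : Type*} {s : Finset ι} {y : ι → ℝ} {a : ℝ}
    (hy : ∀ i ∈ s, 0 < y i) (ha : 0 < a) (h : ∑ i ∈ s, y i ≤ #s * a) :
    ∏ i ∈ s, y i ≤ a ^ #s := by
  have hmean : ∑ i ∈ s, y i / a ≤ #s := by rwa [← sum_div, div_le_iff₀ ha]
  simpa using prod_le_prod_of_sum_div_le_card hy (fun _ _ => ha) hmean

lemma Fin.prod_le_mul_pow_of_sum_le {n : ℕ} {y : Fin (n + 1) → ℝ} {a b : ℝ}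
    (hy : ∀ i, 0 < y i) (ha : 0 < a) (hab : a ≤ b) (h0 : y 0 ≤ a)
    (h : ∑ i, y i ≤ a + n * b) : ∏ i, y i ≤ a * b ^ n := by
  have hb : 0 < b := ha.trans_le hab
  let z : Fin (n + 1) → ℝ := Fin.cons a fun _ => b
  have hz : ∀ i ∈ univ, 0 < z i := fun i _ => by cases i using Fin.cases <;> simp [z, ha, hb]
  have hhead : (y 0 - a) / a ≤ (y 0 - a) / b := by
    rw [div_le_div_iff₀ ha hb]; nlinarith
  have hmean : ∑ i, y i / z i ≤ #(univ : Finset (Fin (n + 1))) := by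
    simp only [Fin.sum_univ_succ, z, Fin.cons_zero, Fin.cons_succ, card_univ,
      Fintype.card_fin] at h ⊢
    have hfirst : y 0 / a = 1 + (y 0 - a) / a := by field_simp; ring
    have hrest : (∑ i : Fin n, y i.succ) / b ≤ n - (y 0 - a) / b := calc
      _ ≤ (a + n * b - y 0) / b := by gcongr; linarith
      _ = n - (y 0 - a) / b := by field_simp; ring
    rw [← sum_div]
    push_cast
    linarith
  simpa [Fin.prod_univ_succ, z] using prod_le_prod_of_sum_div_le_card (fun i _ => hy i) hz hmean

def Admissible (m : ℕ) (p : ℝ) {k : ℕ} (x : Fin k → ℝ) : Prop :=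
  (∀ i, 1 ≤ x i) ∧ ∀ i : Fin k, ∏ j ∈ Iic i, x j ≤ (m : ℝ) ^ (i : ℕ) / p

def valueSet (m k : ℕ) (p : ℝ) : Set ℝ :=
  {r | ∃ x : Fin k → ℝ, Admissible m p x ∧ r = ∏ i, √(log (exp 1 * x i))}

lemma log_exp_one_mul {x : ℝ} (hx : 0 < x) : log (exp 1 * x) = 1 + log x := by
  rw [log_mul (exp_ne_zero 1) hx.ne', log_exp]

namespace Admissible

variable {m : ℕ} {p : ℝ}

lemma one_le_log {k : ℕ} {x : Fin k → ℝ} (h : Admissible m p x) (i : Fin k) :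
    1 ≤ log (exp 1 * x i) := by
  rw [log_exp_one_mul (by linarith [h.1 i])]
  linarith [log_nonneg (h.1 i)]

variable {n : ℕ} {x : Fin (n + 1) → ℝ}

lemma log_head_le (h : Admissible m p x) : log (exp 1 * x 0) ≤ 1 - log p := by
  have h0 := h.2 ⊥
  rw [Iic_bot, prod_singleton, bot_eq_zero, Fin.val_zero, pow_zero, one_div] at h0
  have hx0 : 0 < x 0 := by linarith [h.1 0]
  have hlog := log_le_log hx0 h0
  rw [log_inv] at hlog
  rw [log_exp_one_mul hx0]
  linarith

lemma sum_log_le (h : Admissible m p x) (hm : 1 ≤ m) (hp : 0 < p) :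
    ∑ i, log (exp 1 * x i) ≤ n + 1 + n * log m - log p := by
  have hlast := h.2 ⊤
  rw [Iic_top, Fin.top_eq_last, Fin.val_last] at hlast
  have hx : ∀ i ∈ univ, 0 < x i := fun i _ => by linarith [h.1 i]
  have hm0 : (0 : ℝ) < m := by exact_mod_cast hm
  have hlog := log_le_log (prod_pos hx) hlast
  rw [log_prod fun i hi => (hx i hi).ne', log_div (by positivity) hp.ne', log_pow] at hlog
  simp only [fun i => log_exp_one_mul (hx i (mem_univ i)), sum_add_distrib, sum_const,
    card_univ, Fintype.card_fin, nsmul_eq_mul]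
  push_cast
  linarith

end Admissible

lemma isGreatest_valueSet {m k : ℕ} {p : ℝ} {x₀ : Fin k → ℝ} (h₀ : Admissible m p x₀)
    (hle : ∀ x : Fin k → ℝ, Admissible m p x → ∏ i, log (exp 1 * x i) ≤ ∏ i, log (exp 1 * x₀ i)) :
    IsGreatest (valueSet m k p) (∏ i, √(log (exp 1 * x₀ i))) := by
  refine ⟨⟨x₀, h₀, rfl⟩, ?_⟩
  rintro _ ⟨x, hx, rfl⟩
  have hnonneg {y : Fin k → ℝ} (hy : Admissible m p y) : ∀ i ∈ univ, 0 ≤ log (exp 1 * y i) :=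
    fun i _ => zero_le_one.trans (hy.one_le_log i)
  rw [← sqrt_prod _ (hnonneg hx), ← sqrt_prod _ (hnonneg h₀)]
  exact sqrt_le_sqrt (hle x hx)

section Optimum

variable {m n : ℕ} {p : ℝ}

lemma one_le_one_add_log_div (hm : 1 ≤ m) (hp : 0 < p) (hp1 : p ≤ 1) :
    1 ≤ 1 + (n * log m - log p) / (n + 1) := by
  have hlogm : 0 ≤ log m := log_nonneg (by exact_mod_cast hm)
  rw [le_add_iff_nonneg_right]
  exact div_nonneg (by nlinarith [log_nonpos hp.le hp1]) (by positivity)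

lemma le_one_of_le_inv (hm : 1 ≤ m) (hpm : p ≤ 1 / m) : p ≤ 1 :=
  hpm.trans (div_le_one_of_le₀ (by exact_mod_cast hm) (by positivity))

lemma isGreatest_valueSet_of_le_inv (hm : 1 ≤ m) (hp : 0 < p) (hpm : p ≤ 1 / m) :
    IsGreatest (valueSet m (n + 1) p) (√(1 + (n * log m - log p) / (n + 1)) ^ (n + 1)) := by
  set a := 1 + (n * log m - log p) / (n + 1) with ha
  have hm0 : (0 : ℝ) < m := by exact_mod_cast hm
  have hmp : log m + log p ≤ 0 := by
    rw [← log_mul hm0.ne' hp.ne']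
    exact log_nonpos (by positivity) (by rwa [le_div_iff₀ hm0, mul_comm] at hpm)
  have ha1 : 1 ≤ a := one_le_one_add_log_div hm hp (le_one_of_le_inv hm hpm)
  let x₀ : Fin (n + 1) → ℝ := fun _ => exp (a - 1)
  have hx₀ : ∀ i, log (exp 1 * x₀ i) = a := fun i => by
    rw [log_exp_one_mul (exp_pos _), log_exp]; ring
  have hadm : Admissible m p x₀ := by
    refine ⟨fun _ => one_le_exp (by linarith), fun i => ?_⟩
    have hi : (i : ℝ) ≤ n := by exact_mod_cast Nat.lt_succ_iff.1 i.isLt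
    have hexponent : ((i : ℕ) + 1 : ℝ) * (a - 1) ≤ i * log m - log p := by
      rw [ha, add_sub_cancel_left, mul_div_assoc', div_le_iff₀ (by positivity)]
      nlinarith [mul_nonneg (sub_nonneg.2 hi) (neg_nonneg.2 hmp)]
    calc ∏ j ∈ Iic i, x₀ j = exp (((i : ℕ) + 1 : ℝ) * (a - 1)) := by
          rw [prod_const, Fin.card_Iic, ← exp_nat_mul]; push_cast; rfl
      _ ≤ exp (i * log m - log p) := exp_le_exp.2 hexponent
      _ = (m : ℝ) ^ (i : ℕ) / p := by rw [exp_sub, exp_nat_mul, exp_log hm0, exp_log hp]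
  have hval : ∏ i, √(log (exp 1 * x₀ i)) = √a ^ (n + 1) := by simp [hx₀]
  refine hval ▸ isGreatest_valueSet hadm fun x hx => ?_
  have hsum : ∑ i, log (exp 1 * x i) ≤ #(univ : Finset (Fin (n + 1))) * a := calc
    _ ≤ n + 1 + n * log m - log p := hx.sum_log_le hm hp
    _ = #(univ : Finset (Fin (n + 1))) * a := by
      rw [card_univ, Fintype.card_fin, ha]; push_cast; field_simp; ring
  simpa [hx₀] using prod_le_pow_card_of_sum_le
    (fun i _ => zero_lt_one.trans_le (hx.one_le_log i)) (by linarith) hsum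

lemma isGreatest_valueSet_of_inv_lt (hm : 1 ≤ m) (hpm : 1 / m < p) (hp1 : p ≤ 1) :
    IsGreatest (valueSet m (n + 1) p) (√(1 - log p) * √(1 + log m) ^ n) := by
  have hm0 : (0 : ℝ) < m := by exact_mod_cast hm
  have hp : 0 < p := lt_trans (by positivity) hpm
  have hlogp : -log m < log p := by
    rw [← log_inv, ← one_div]; exact log_lt_log (by positivity) hpm
  have ha : 0 < 1 - log p := by linarith [log_nonpos hp.le hp1]
  let x₀ : Fin (n + 1) → ℝ := fun j => if j = 0 then p⁻¹ else m
  have hadm : Admissible m p x₀ := by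
    refine ⟨fun j => ?_, fun i => ?_⟩
    · by_cases hj : j = 0
      · simpa [x₀, hj] using one_le_inv_iff₀.2 ⟨hp, hp1⟩
      · simpa [x₀, hj] using hm
    · have h0 : (0 : Fin (n + 1)) ∈ Iic i := mem_Iic.2 (Fin.zero_le i)
      rw [← mul_prod_erase _ _ h0, prod_congr rfl fun j hj => if_neg (ne_of_mem_erase hj),
        prod_const, card_erase_of_mem h0, Fin.card_Iic]
      simp [x₀, div_eq_inv_mul]
  have hx₀zero : log (exp 1 * x₀ 0) = 1 - log p := by
    simp [x₀, log_exp_one_mul, hp, log_inv, sub_eq_add_neg]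
  have hx₀succ : ∀ i : Fin n, log (exp 1 * x₀ i.succ) = 1 + log m := fun i => by
    simp [x₀, log_exp_one_mul, hm0]
  have hval : ∏ i, √(log (exp 1 * x₀ i)) = √(1 - log p) * √(1 + log m) ^ n := by
    simp [Fin.prod_univ_succ, hx₀zero, hx₀succ]
  refine hval ▸ isGreatest_valueSet hadm fun x hx => ?_
  rw [Fin.prod_univ_succ (fun i => log (exp 1 * x₀ i)), hx₀zero]
  simp only [hx₀succ, prod_const, card_univ, Fintype.card_fin]
  refine Fin.prod_le_mul_pow_of_sum_le (fun i => zero_lt_one.trans_le (hx.one_le_log i)) ha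
    (by linarith) hx.log_head_le ?_
  linarith [hx.sum_log_le hm hp]

lemma Lam_of_le_inv (hm : 1 ≤ m) (hp : 0 < p) (hpm : p ≤ 1 / m) :
    Lam m (n + 1) p = p * √(1 + (n * log m - log p) / (n + 1)) ^ (n + 1) := by
  have hm0 : (0 : ℝ) < m := by exact_mod_cast hm
  have hmean : 1 / ((n + 1 : ℕ) : ℝ) * log (exp (n + 1 : ℕ) * (m : ℝ) ^ (n + 1 - 1) / p) =
      1 + (n * log m - log p) / (n + 1) := by
    rw [log_div (by positivity) hp.ne', log_mul (exp_ne_zero _) (by positivity), log_exp,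
      log_pow]
    push_cast
    field_simp
    ring
  rw [Lam, if_neg hp.not_ge, if_pos hpm, hmean, rpow_div_two_eq_sqrt _
    (zero_le_one.trans (one_le_one_add_log_div hm hp (le_one_of_le_inv hm hpm))), rpow_natCast]

lemma Lam_of_inv_lt (hm : 1 ≤ m) (hpm : 1 / m < p) :
    Lam m (n + 1) p = p * (√(1 - log p) * √(1 + log m) ^ n) := by
  have hm0 : (0 : ℝ) < m := by exact_mod_cast hm
  have hp : 0 < p := lt_trans (by positivity) hpm
  rw [Lam, if_neg hp.not_ge, if_neg hpm.not_ge, log_div (exp_ne_zero 1) hp.ne',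
    log_mul (exp_ne_zero 1) hm0.ne', log_exp]
  have hb : 0 ≤ 1 + log m := by linarith [log_nonneg (show (1 : ℝ) ≤ m by exact_mod_cast hm)]
  push_cast
  rw [add_sub_cancel_right, rpow_div_two_eq_sqrt _ hb, rpow_natCast, mul_assoc]

end Optimum

theorem Lam_opt (m k : ℕ) (hm : 1 ≤ m) (hk : 1 ≤ k) (p : ℝ) (hp : p ∈ Set.Ioc (0 : ℝ) 1) :
    ∃ r : ℝ,
      IsGreatest {r : ℝ | ∃ x : Fin k → ℝ, (∀ i, 1 ≤ x i) ∧
          (∀ i : Fin k, ∏ j ∈ Finset.Iic i, x j ≤ (m : ℝ) ^ (i : ℕ) / p) ∧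
          r = ∏ i, Real.sqrt (Real.log (Real.exp 1 * x i))} r ∧
        Lam m k p = p * r := by
  obtain ⟨n, rfl⟩ : ∃ n, k = n + 1 := ⟨k - 1, by omega⟩
  obtain ⟨hp0, hp1⟩ := hp
  -- reassociating the conjunction turns the set into `valueSet m (n + 1) p`
  simp only [← and_assoc]
  rcases le_or_gt p (1 / m) with hpm | hpm
  · exact ⟨_, isGreatest_valueSet_of_le_inv (n := n) hm hp0 hpm, Lam_of_le_inv hm hp0 hpm⟩
  · exact ⟨_, isGreatest_valueSet_of_inv_lt (n := n) hm hpm hp1, Lam_of_inv_lt hm hpm⟩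
end

section
/- For positive integers m, k and all p, q ∈ [0,1], one has q·Λ_{m,k}(p) ≤ Λ_{m,k}(p·q); equivalently, Λ_{m,k}(p)/p is nonincreasing in p on (0,1]. -/
open Real

theorem Lam_mul_le (m k : ℕ) (hm : 1 ≤ m) (hk : 1 ≤ k) (p q : ℝ)
    (hp : p ∈ Set.Icc (0 : ℝ) 1) (hq : q ∈ Set.Icc (0 : ℝ) 1) :
    q * Lam m k p ≤ Lam m k (p * q) := by
  obtain ⟨hp0, hp1⟩ := hp
  obtain ⟨hq0, hq1⟩ := hq
  rcases eq_or_lt_of_le hq0 with hq0' | hq0'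
  · subst q; simp [Lam]
  rcases eq_or_lt_of_le hp0 with hp0' | hp0'
  · subst p; simp [Lam]
  have hm' : (1:ℝ) ≤ m := by exact_mod_cast hm
  have hk' : (1:ℝ) ≤ k := by exact_mod_cast hk
  have hm0 : (0:ℝ) < m := by linarith
  have hk0 : (0:ℝ) < k := by linarith
  have hpq0 : 0 < p * q := mul_pos hp0' hq0'
  have hpqp : p * q ≤ p := by nlinarith
  have hpq1 : p * q ≤ 1 := le_trans hpqp hp1
  have hlogp : Real.log p ≤ 0 := Real.log_nonpos hp0'.le hp1
  have hlogpq : Real.log (p * q) ≤ 0 := Real.log_nonpos hpq0.le hpq1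
  have hloglog : Real.log (p * q) ≤ Real.log p := Real.log_le_log hpq0 hpqp
  have hlogm : (0:ℝ) ≤ Real.log m := Real.log_nonneg hm'
  have hkm : (0:ℝ) ≤ ((k - 1 : ℕ) : ℝ) * Real.log m := by positivity
  -- log of the first-branch argument
  have hlog : ∀ x : ℝ, 0 < x →
      Real.log (Real.exp k * (m:ℝ) ^ (k - 1) / x)
        = (k:ℝ) + ((k - 1 : ℕ) : ℝ) * Real.log m - Real.log x := by
    intro x hx
    rw [Real.log_div (by positivity) hx.ne', Real.log_mul (Real.exp_pos _).ne'
      (by positivity), Real.log_exp, Real.log_pow]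
  unfold Lam
  rw [if_neg (not_le.2 hp0'), if_neg (not_le.2 hpq0)]
  by_cases h1 : p ≤ 1 / m
  · -- both p and p*q in the first branch
    have h2 : p * q ≤ 1 / m := le_trans hpqp h1
    rw [if_pos h1, if_pos h2]
    have hBp : (0:ℝ) ≤ 1 / (k:ℝ) * Real.log (Real.exp k * (m:ℝ) ^ (k - 1) / p) := by
      rw [hlog p hp0']
      have : (0:ℝ) ≤ (k:ℝ) + ((k - 1 : ℕ) : ℝ) * Real.log m - Real.log p := by linarith
      positivity
    have hBle : 1 / (k:ℝ) * Real.log (Real.exp k * (m:ℝ) ^ (k - 1) / p)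
        ≤ 1 / (k:ℝ) * Real.log (Real.exp k * (m:ℝ) ^ (k - 1) / (p * q)) := by
      rw [hlog p hp0', hlog (p*q) hpq0]
      apply mul_le_mul_of_nonneg_left _ (by positivity)
      linarith
    calc q * (p * (1 / (k:ℝ) * Real.log (Real.exp k * (m:ℝ) ^ (k - 1) / p)) ^ ((k:ℝ)/2))
        = (p * q) * (1 / (k:ℝ) * Real.log (Real.exp k * (m:ℝ) ^ (k - 1) / p)) ^ ((k:ℝ)/2) := by
          ring
      _ ≤ (p * q) * (1 / (k:ℝ) * Real.log (Real.exp k * (m:ℝ) ^ (k - 1) / (p * q))) ^ ((k:ℝ)/2) := by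
          apply mul_le_mul_of_nonneg_left _ hpq0.le
          exact Real.rpow_le_rpow hBp hBle (by positivity)
  · -- p in second branch
    rw [if_neg h1]
    push_neg at h1
    have hA : (1:ℝ) ≤ Real.log (Real.exp 1 * m) := by
      rw [Real.log_mul (Real.exp_pos _).ne' hm0.ne', Real.log_exp]; linarith
    have hA0 : (0:ℝ) < Real.log (Real.exp 1 * m) := by linarith
    have hBp : (0:ℝ) ≤ Real.log (Real.exp 1 / p) := by
      rw [Real.log_div (Real.exp_pos _).ne' hp0'.ne', Real.log_exp]; linarith
    have hlogep : Real.log (Real.exp 1 / p) = 1 - Real.log p := by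
      rw [Real.log_div (Real.exp_pos _).ne' hp0'.ne', Real.log_exp]
    by_cases h2 : p * q ≤ 1 / m
    · -- hard case: p > 1/m ≥ p*q
      rw [if_pos h2]
      set A := Real.log (Real.exp 1 * m) with hAdef
      have hAval : A = 1 + Real.log m := by
        rw [hAdef, Real.log_mul (Real.exp_pos _).ne' hm0.ne', Real.log_exp]
      -- from p > 1/m : log p ≥ -log m
      have hpm : -Real.log m ≤ Real.log p := by
        have := Real.log_le_log (by positivity : (0:ℝ) < 1/m) h1.le
        rwa [one_div, Real.log_inv] at this
      -- from p*q ≤ 1/m : log (p*q) ≤ -log m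
      have hpqm : Real.log (p * q) ≤ -Real.log m := by
        have := Real.log_le_log hpq0 h2
        rwa [one_div, Real.log_inv] at this
      have hBA : Real.log (Real.exp 1 / p) ≤ A := by
        rw [hlogep, hAval]; linarith
      have hkc : ((k - 1 : ℕ) : ℝ) = (k:ℝ) - 1 := by
        rw [Nat.cast_sub hk, Nat.cast_one]
      have hBaseA : A ≤ 1 / (k:ℝ) * Real.log (Real.exp k * (m:ℝ) ^ (k - 1) / (p * q)) := by
        rw [hlog (p*q) hpq0, hkc, hAval, one_div, inv_mul_eq_div, le_div_iff₀ hk0]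
        nlinarith
      calc q * (p * Real.sqrt (Real.log (Real.exp 1 / p)) * A ^ (((k:ℝ) - 1) / 2))
          = (p * q) * (Real.sqrt (Real.log (Real.exp 1 / p)) * A ^ (((k:ℝ) - 1) / 2)) := by
            ring
        _ ≤ (p * q) * (1 / (k:ℝ) * Real.log (Real.exp k * (m:ℝ) ^ (k - 1) / (p * q))) ^ ((k:ℝ)/2) := by
            apply mul_le_mul_of_nonneg_left _ hpq0.le
            calc Real.sqrt (Real.log (Real.exp 1 / p)) * A ^ (((k:ℝ) - 1) / 2)
                ≤ Real.sqrt A * A ^ (((k:ℝ) - 1) / 2) := by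
                  exact mul_le_mul_of_nonneg_right (Real.sqrt_le_sqrt hBA)
                    (Real.rpow_nonneg hA0.le _)
              _ = A ^ ((1:ℝ)/2) * A ^ (((k:ℝ) - 1) / 2) := by rw [Real.sqrt_eq_rpow]
              _ = A ^ ((k:ℝ)/2) := by
                  rw [← Real.rpow_add hA0, show (1:ℝ)/2 + ((k:ℝ) - 1)/2 = (k:ℝ)/2 by ring]
              _ ≤ (1 / (k:ℝ) * Real.log (Real.exp k * (m:ℝ) ^ (k - 1) / (p * q))) ^ ((k:ℝ)/2) :=
                  Real.rpow_le_rpow hA0.le hBaseA (by positivity)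
    · rw [if_neg h2]
      have hBpq : Real.log (Real.exp 1 / p) ≤ Real.log (Real.exp 1 / (p * q)) := by
        rw [hlogep, Real.log_div (Real.exp_pos _).ne' hpq0.ne', Real.log_exp]
        linarith
      calc q * (p * Real.sqrt (Real.log (Real.exp 1 / p)) *
              Real.log (Real.exp 1 * m) ^ (((k:ℝ) - 1) / 2))
          = (p * q) * Real.sqrt (Real.log (Real.exp 1 / p)) *
              Real.log (Real.exp 1 * m) ^ (((k:ℝ) - 1) / 2) := by ring
        _ ≤ (p * q) * Real.sqrt (Real.log (Real.exp 1 / (p * q))) *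
              Real.log (Real.exp 1 * m) ^ (((k:ℝ) - 1) / 2) := by
            apply mul_le_mul_of_nonneg_right _ (by positivity)
            apply mul_le_mul_of_nonneg_left _ hpq0.le
            exact Real.sqrt_le_sqrt hBpq
end

section
/- For positive integers m, k, ℓ and all p, q ∈ [0,1], one has Λ_{m,k}(p)·Λ_{m,ℓ}(q/m) ≤ Λ_{m,k+ℓ}(p·q)/m. -/
/-!
Write `L_k(p) = log (e^k m^(k-1) / p)`, so that `Λ_{m,k}(p) = p (L_k(p)/k)^(k/2)` for `p ≤ 1/m`.
For every `p ≤ 1` weighted AM-GM (weights `1` and `k - 1`) bounds `Λ_{m,k}(p)` by this formula,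
and `L_k(p) + L_ℓ(q/m) = L_{k+ℓ}(pq)`; AM-GM with weights `k` and `ℓ` then settles the case
`pq ≤ 1/m`. When `pq > 1/m`, put `u = log (e/p)`, `v = log (1/q)` and `M = log (em) ≥ u + v`:
the claim becomes `u (M + v/ℓ)^ℓ ≤ (u + v) M^ℓ`, which follows from
`(1 + t/ℓ)^ℓ ≤ e^t ≤ 1/(1 - t)` at `t = v/M`.
-/

open Real

theorem rpow_mul_rpow_le_weighted_mean {a b x y : ℝ} (ha : 0 ≤ a) (hb : 0 ≤ b)
    (hab : 0 < a + b) (hx : 0 ≤ x) (hy : 0 ≤ y) :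
    x ^ a * y ^ b ≤ ((a * x + b * y) / (a + b)) ^ (a + b) := by
  have amgm := geom_mean_le_arith_mean2_weighted (div_nonneg ha hab.le) (div_nonneg hb hab.le)
    hx hy (by field_simp)
  calc x ^ a * y ^ b = (x ^ (a / (a + b)) * y ^ (b / (a + b))) ^ (a + b) := by
        rw [mul_rpow (by positivity) (by positivity), ← rpow_mul hx, ← rpow_mul hy,
          div_mul_cancel₀ _ hab.ne', div_mul_cancel₀ _ hab.ne']
    _ ≤ (a / (a + b) * x + b / (a + b) * y) ^ (a + b) := by gcongr
    _ = ((a * x + b * y) / (a + b)) ^ (a + b) := by ring_nf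

theorem mul_add_div_rpow_le_add_mul_rpow {u v M L : ℝ} (hu : 0 < u) (hv : 0 ≤ v) (hL : 0 < L)
    (hM : u + v ≤ M) :
    u * (M + v / L) ^ L ≤ (u + v) * M ^ L := by
  have hM0 : 0 < M := by linarith
  have hvM : v / M < 1 := (div_lt_one hM0).2 (by linarith)
  have compound : (M + v / L) ^ L ≤ M ^ L * exp (v / M) := calc
    (M + v / L) ^ L = M ^ L * (1 + v / M / L) ^ L := by
      rw [← mul_rpow hM0.le (by positivity)]; congr 1; field_simp
    _ ≤ M ^ L * exp (v / M / L) ^ L := by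
      gcongr; linarith [add_one_le_exp (v / M / L)]
    _ = M ^ L * exp (v / M) := by rw [← exp_mul, div_mul_cancel₀ _ hL.ne']
  have exp_le : u * exp (v / M) ≤ u + v := calc
    u * exp (v / M) ≤ u * (1 / (1 - v / M)) := by
      gcongr; exact exp_bound_div_one_sub_of_interval (by positivity) hvM
    _ ≤ u + v := by
      rw [← sub_pos] at hvM
      rw [mul_one_div, div_le_iff₀ hvM]
      field_simp
      nlinarith
  calc u * (M + v / L) ^ L ≤ u * (M ^ L * exp (v / M)) := by gcongr
    _ = u * exp (v / M) * M ^ L := by ring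
    _ ≤ (u + v) * M ^ L := by gcongr

theorem sqrt_mul_add_div_rpow_le {u v M L : ℝ} (hu : 0 < u) (hv : 0 ≤ v) (hL : 0 < L)
    (hM : u + v ≤ M) :
    √u * (M + v / L) ^ (L / 2) ≤ √(u + v) * M ^ (L / 2) := by
  have hM0 : 0 < M := by linarith
  rw [sqrt_eq_rpow, sqrt_eq_rpow, div_eq_mul_one_div L 2, rpow_mul (by positivity),
    rpow_mul hM0.le, ← mul_rpow hu.le (by positivity),
    ← mul_rpow (by positivity) (by positivity)]
  exact rpow_le_rpow (by positivity) (mul_add_div_rpow_le_add_mul_rpow hu hv hL hM) (by norm_num)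

noncomputable def lamLog (m k : ℕ) (p : ℝ) : ℝ := log (exp k * (m : ℝ) ^ (k - 1) / p)

noncomputable def lamSmall (m k : ℕ) (p : ℝ) : ℝ := p * (lamLog m k p / k) ^ ((k : ℝ) / 2)

section

variable {m k l : ℕ} {p q : ℝ}

theorem Lam_eq_lamSmall (hp : 0 < p) (hpm : p ≤ 1 / m) : Lam m k p = lamSmall m k p := by
  rw [Lam, if_neg hp.not_ge, if_pos hpm, lamSmall, lamLog, one_div_mul_eq_div]

theorem Lam_eq_of_lt (hpm : 1 / m < p) :
    Lam m k p = p * √(log (exp 1 / p)) * log (exp 1 * m) ^ (((k : ℝ) - 1) / 2) := by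
  have hp : 0 < p := lt_of_le_of_lt (by positivity) hpm
  rw [Lam, if_neg hp.not_ge, if_neg hpm.not_ge]

theorem lamLog_nonneg (hm : 1 ≤ m) (hp : 0 < p) (hp1 : p ≤ 1) : 0 ≤ lamLog m k p := by
  refine log_nonneg ((one_le_div hp).2 (hp1.trans ?_))
  exact one_le_mul_of_one_le_of_one_le (one_le_exp (Nat.cast_nonneg k))
    (one_le_pow₀ (Nat.one_le_cast.2 hm))

theorem lamSmall_nonneg (hm : 1 ≤ m) (hp : 0 < p) (hp1 : p ≤ 1) : 0 ≤ lamSmall m k p := by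
  have := lamLog_nonneg (k := k) hm hp hp1
  unfold lamSmall
  positivity

theorem lamLog_eq_log_add_mul_log (hm : 1 ≤ m) (hk : 1 ≤ k) (hp : 0 < p) :
    lamLog m k p = log (exp 1 / p) + (k - 1) * log (exp 1 * m) := by
  have hm0 : (0 : ℝ) < m := by exact_mod_cast hm
  obtain ⟨j, rfl⟩ := Nat.exists_eq_add_of_le' hk
  have split : exp ↑(j + 1) * (m : ℝ) ^ j / p = exp 1 / p * (exp 1 * m) ^ j := by
    rw [Nat.cast_succ, exp_add, ← exp_one_pow]
    field_simp
    ring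
  rw [lamLog, add_tsub_cancel_right, split, log_mul (by positivity) (by positivity), log_pow]
  push_cast
  ring

theorem lamLog_add (hm : 1 ≤ m) (hk : 1 ≤ k) (hl : 1 ≤ l) (hp : 0 < p) (hq : 0 < q) :
    lamLog m k p + lamLog m l (q / m) = lamLog m (k + l) (p * q) := by
  have hm0 : (0 : ℝ) < m := by exact_mod_cast hm
  obtain ⟨i, rfl⟩ := Nat.exists_eq_add_of_le' hk
  obtain ⟨j, rfl⟩ := Nat.exists_eq_add_of_le' hl
  rw [lamLog, lamLog, lamLog, ← log_mul (by positivity) (by positivity)]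
  congr 1
  rw [show i + 1 + (j + 1) - 1 = i + j + 1 by omega]
  push_cast
  simp only [exp_add]
  field_simp
  ring

theorem Lam_le_lamSmall (hm : 1 ≤ m) (hk : 1 ≤ k) (hp : 0 < p) (hp1 : p ≤ 1) :
    Lam m k p ≤ lamSmall m k p := by
  rcases le_or_gt p (1 / m) with hpm | hpm
  · exact (Lam_eq_lamSmall hp hpm).le
  have hk1 : (0 : ℝ) ≤ k - 1 := sub_nonneg.2 (by exact_mod_cast hk)
  have hx : 0 ≤ log (exp 1 / p) :=
    log_nonneg ((one_le_div hp).2 (hp1.trans (one_le_exp zero_le_one)))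
  have hy : 0 ≤ log (exp 1 * m) :=
    log_nonneg (one_le_mul_of_one_le_of_one_le (one_le_exp zero_le_one) (Nat.one_le_cast.2 hm))
  have amgm := rpow_mul_rpow_le_weighted_mean (a := 1 / 2) (b := ((k : ℝ) - 1) / 2)
    (by norm_num) (by positivity) (by linarith) hx hy
  rw [Lam_eq_of_lt hpm, lamSmall, lamLog_eq_log_add_mul_log hm hk hp, mul_assoc, sqrt_eq_rpow]
  gcongr
  rw [show (1 : ℝ) / 2 + (k - 1) / 2 = k / 2 by ring] at amgm
  refine amgm.trans_eq (congrArg (· ^ ((k : ℝ) / 2)) ?_)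
  field_simp

theorem lamSmall_mul_lamSmall_le (hm : 1 ≤ m) (hk : 1 ≤ k) (hl : 1 ≤ l) (hp : 0 < p)
    (hp1 : p ≤ 1) (hq : 0 < q) (hq1 : q ≤ 1) :
    lamSmall m k p * lamSmall m l (q / m) ≤ lamSmall m (k + l) (p * q) / m := by
  have hm0 : (0 : ℝ) < m := by exact_mod_cast hm
  have hk0 : (0 : ℝ) < k := by exact_mod_cast hk
  have hl0 : (0 : ℝ) < l := by exact_mod_cast hl
  have hqm1 : q / m ≤ 1 := div_le_one_of_le₀ (hq1.trans (Nat.one_le_cast.2 hm)) hm0.le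
  have amgm := rpow_mul_rpow_le_weighted_mean (a := (k : ℝ) / 2) (b := (l : ℝ) / 2)
    (by positivity) (by positivity) (by positivity)
    (div_nonneg (lamLog_nonneg (k := k) hm hp hp1) hk0.le)
    (div_nonneg (lamLog_nonneg (k := l) hm (div_pos hq hm0) hqm1) hl0.le)
  rw [lamSmall, lamSmall, lamSmall, ← lamLog_add hm hk hl hp hq]
  rw [show (k : ℝ) / 2 + l / 2 = (k + l) / 2 by ring] at amgm
  calc _ = p * q / m * ((lamLog m k p / k) ^ ((k : ℝ) / 2) *
        (lamLog m l (q / m) / l) ^ ((l : ℝ) / 2)) := by ring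
    _ ≤ p * q / m *
        (((lamLog m k p + lamLog m l (q / m)) / (k + l)) ^ (((k : ℝ) + l) / 2)) := by
      refine mul_le_mul_of_nonneg_left (amgm.trans_eq (congrArg (· ^ (((k : ℝ) + l) / 2)) ?_))
        (by positivity)
      field_simp
    _ = _ := by push_cast; ring

theorem Lam_mul_lamSmall_le_of_lt (hm : 1 ≤ m) (hl : 1 ≤ l) (hp1 : p ≤ 1) (hq : 0 < q)
    (hq1 : q ≤ 1) (hpq : 1 / m < p * q) :
    Lam m k p * lamSmall m l (q / m) ≤ Lam m (k + l) (p * q) / m := by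
  have hm0 : (0 : ℝ) < m := by exact_mod_cast hm
  have hl0 : (0 : ℝ) < l := by exact_mod_cast hl
  have hp : 0 < p := (mul_pos_iff_of_pos_right hq).1 (lt_of_le_of_lt (by positivity) hpq)
  have hpm : 1 / m < p := hpq.trans_le (mul_le_of_le_one_right hp.le hq1)
  have hu : 0 < log (exp 1 / p) :=
    log_pos ((one_lt_div hp).2 (hp1.trans_lt (one_lt_exp_iff.2 one_pos)))
  have hv : 0 ≤ -log q := neg_nonneg.2 (log_nonpos hq.le hq1)
  have huv : log (exp 1 / (p * q)) = log (exp 1 / p) + -log q := by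
    rw [← div_div, log_div (by positivity) hq.ne']; ring
  have hM : log (exp 1 / p) + -log q ≤ log (exp 1 * m) := by
    rw [← huv]
    refine log_le_log (by positivity) ?_
    rw [div_le_iff₀ (by positivity), mul_assoc]
    exact le_mul_of_one_le_right (exp_pos 1).le ((div_lt_iff₀' hm0).1 hpq).le
  have hsmall : lamSmall m l (q / m) =
      q / m * (log (exp 1 * m) + -log q / l) ^ ((l : ℝ) / 2) := by
    rw [lamSmall, lamLog_eq_log_add_mul_log hm hl (div_pos hq hm0), div_div_eq_mul_div,
      log_div (by positivity) hq.ne']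
    congr 2
    field_simp
    ring
  have key := sqrt_mul_add_div_rpow_le hu hv hl0 hM
  rw [Lam_eq_of_lt hpm, hsmall, Lam_eq_of_lt hpq, huv]
  set M := log (exp 1 * m)
  have hM0 : 0 < M := hu.trans_le (by linarith)
  calc _ = p * q / m * M ^ (((k : ℝ) - 1) / 2) *
        (√(log (exp 1 / p)) * (M + -log q / l) ^ ((l : ℝ) / 2)) := by ring
    _ ≤ p * q / m * M ^ (((k : ℝ) - 1) / 2) *
        (√(log (exp 1 / p) + -log q) * M ^ ((l : ℝ) / 2)) :=
      mul_le_mul_of_nonneg_left key (mul_nonneg (by positivity) (rpow_nonneg hM0.le _))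
    _ = _ := by
      rw [show (((k + l : ℕ) : ℝ) - 1) / 2 = ((k : ℝ) - 1) / 2 + l / 2 by push_cast; ring,
        rpow_add hM0]
      ring

end

theorem Lam_collapsing (m k l : ℕ) (hm : 1 ≤ m) (hk : 1 ≤ k) (hl : 1 ≤ l) (p q : ℝ)
    (hp : p ∈ Set.Icc (0 : ℝ) 1) (hq : q ∈ Set.Icc (0 : ℝ) 1) :
    Lam m k p * Lam m l (q / m) ≤ Lam m (k + l) (p * q) / m := by
  obtain ⟨hp0, hp1⟩ := hp
  obtain ⟨hq0, hq1⟩ := hq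
  rcases hp0.eq_or_lt with rfl | hp0
  · simp [Lam]
  rcases hq0.eq_or_lt with rfl | hq0
  · simp [Lam]
  have hm0 : (0 : ℝ) < m := by exact_mod_cast hm
  have hqm1 : q / m ≤ 1 := div_le_one_of_le₀ (hq1.trans (Nat.one_le_cast.2 hm)) hm0.le
  rw [Lam_eq_lamSmall (k := l) (by positivity) (div_le_div_of_nonneg_right hq1 hm0.le)]
  rcases le_or_gt (p * q) (1 / m) with hpq | hpq
  · calc _ ≤ lamSmall m k p * lamSmall m l (q / m) := by
          gcongr
          · exact lamSmall_nonneg hm (div_pos hq0 hm0) hqm1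
          · exact Lam_le_lamSmall hm hk hp0 hp1
      _ ≤ lamSmall m (k + l) (p * q) / m := lamSmall_mul_lamSmall_le hm hk hl hp0 hp1 hq0 hq1
      _ = _ := by rw [Lam_eq_lamSmall (by positivity) hpq]
  · exact Lam_mul_lamSmall_le_of_lt hm hl hp1 hq0 hq1 hpq
end

section
/- For positive integers m, k and all p ∈ [0,1], one has Λ_{m,k}(p) ≤ √(2^k·p)·Λ_{m,k}(√p). -/
open Real

set_option maxHeartbeats 1000000 in
theorem Lam_sqrt (m k : ℕ) (hm : 1 ≤ m) (hk : 1 ≤ k) (p : ℝ) (hp : p ∈ Set.Icc (0 : ℝ) 1) :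
    Lam m k p ≤ Real.sqrt (2 ^ k * p) * Lam m k (Real.sqrt p) := by
  obtain ⟨hp0, hp1⟩ := hp
  rcases eq_or_lt_of_le hp0 with h0 | hppos
  · simp [Lam, ← h0]
  set q := Real.sqrt p with hq_def
  have hq0 : 0 < q := Real.sqrt_pos.mpr hppos
  have hq2 : q * q = p := Real.mul_self_sqrt hp0
  have hq1 : q ≤ 1 := Real.sqrt_le_one.2 hp1
  have hm1 : (1 : ℝ) ≤ (m : ℝ) := by exact_mod_cast hm
  have hm0 : (0 : ℝ) < (m : ℝ) := lt_of_lt_of_le one_pos hm1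
  have hk1 : (1 : ℝ) ≤ (k : ℝ) := by exact_mod_cast hk
  have hk0 : (0 : ℝ) < (k : ℝ) := lt_of_lt_of_le one_pos hk1
  have hM0 : 0 ≤ Real.log m := Real.log_nonneg hm1
  have hlq : Real.log q ≤ 0 := Real.log_nonpos hq0.le hq1
  have hlp : Real.log p = 2 * Real.log q := by
    rw [← hq2, Real.log_mul hq0.ne' hq0.ne']; ring
  have hc : ((k - 1 : ℕ) : ℝ) = (k : ℝ) - 1 := by
    have := Nat.cast_sub hk (R := ℝ); simpa using this
  have hcnn : (0 : ℝ) ≤ ((k - 1 : ℕ) : ℝ) := Nat.cast_nonneg _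
  -- log expansion
  have hlogE : ∀ x : ℝ, 0 < x →
      Real.log (Real.exp k * (m : ℝ) ^ (k - 1) / x)
        = (k : ℝ) + ((k - 1 : ℕ) : ℝ) * Real.log m - Real.log x := by
    intro x hx
    rw [Real.log_div (by positivity) hx.ne', Real.log_mul (Real.exp_ne_zero _)
      (by positivity), Real.log_exp, Real.log_pow]
  have hsqrt2k : Real.sqrt ((2 : ℝ) ^ k * p) = Real.sqrt ((2 : ℝ) ^ k) * q :=
    Real.sqrt_mul (by positivity) p
  have h2k : Real.sqrt ((2 : ℝ) ^ k) = (2 : ℝ) ^ ((k : ℝ) / 2) := by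
    rw [Real.sqrt_eq_rpow, ← Real.rpow_natCast 2 k, ← Real.rpow_mul (by norm_num)]
    congr 1; ring
  rw [Lam, Lam, if_neg (not_le.mpr hppos), if_neg (not_le.mpr hq0)]
  rw [hsqrt2k]
  by_cases hqs : q ≤ 1 / (m : ℝ)
  · -- Case A : q ≤ 1/m, hence p ≤ 1/m
    have hps : p ≤ 1 / (m : ℝ) := le_trans (by nlinarith) hqs
    rw [if_pos hps, if_pos hqs]
    set Aq : ℝ := (1 / (k : ℝ)) * Real.log (Real.exp k * (m : ℝ) ^ (k - 1) / q) with hAq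
    set Ap : ℝ := (1 / (k : ℝ)) * Real.log (Real.exp k * (m : ℝ) ^ (k - 1) / p) with hAp
    have hAp0 : 0 ≤ Ap := by
      rw [hAp, hlogE p hppos, hlp]
      have : 0 ≤ (k : ℝ) + ((k - 1 : ℕ) : ℝ) * Real.log m - 2 * Real.log q := by
        nlinarith [mul_nonneg hcnn hM0]
      positivity
    have hAq0 : 0 ≤ Aq := by
      rw [hAq, hlogE q hq0]
      have : 0 ≤ (k : ℝ) + ((k - 1 : ℕ) : ℝ) * Real.log m - Real.log q := by
        nlinarith [mul_nonneg hcnn hM0]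
      positivity
    have hkey : Ap ≤ 2 * Aq := by
      rw [hAp, hAq, hlogE p hppos, hlogE q hq0, hlp,
        show 2 * ((1 / (k : ℝ)) * ((k : ℝ) + ((k - 1 : ℕ) : ℝ) * Real.log m - Real.log q))
          = (1 / (k : ℝ)) * (2 * ((k : ℝ) + ((k - 1 : ℕ) : ℝ) * Real.log m - Real.log q)) by ring]
      apply mul_le_mul_of_nonneg_left _ (by positivity)
      nlinarith [mul_nonneg hcnn hM0]
    have hrpow : Ap ^ ((k : ℝ) / 2) ≤ Real.sqrt ((2 : ℝ) ^ k) * Aq ^ ((k : ℝ) / 2) := by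
      rw [h2k, ← Real.mul_rpow (by norm_num) hAq0]
      exact Real.rpow_le_rpow hAp0 hkey (by positivity)
    calc p * Ap ^ ((k : ℝ) / 2)
        ≤ p * (Real.sqrt ((2 : ℝ) ^ k) * Aq ^ ((k : ℝ) / 2)) :=
          mul_le_mul_of_nonneg_left hrpow hp0
      _ = Real.sqrt ((2 : ℝ) ^ k) * q * (q * Aq ^ ((k : ℝ) / 2)) := by rw [← hq2]; ring
  · rw [if_neg hqs]
    have hqm : 1 / (m : ℝ) < q := not_le.mp hqs
    have hlqm : -Real.log m ≤ Real.log q := by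
      have := Real.log_le_log (by positivity) hqm.le
      rwa [one_div, Real.log_inv] at this
    set L : ℝ := Real.log (Real.exp 1 * m) with hLdef
    have hL : L = 1 + Real.log m := by
      rw [hLdef, Real.log_mul (Real.exp_ne_zero _) hm0.ne', Real.log_exp]
    have hL1 : 1 ≤ L := by rw [hL]; linarith
    set a : ℝ := Real.log (Real.exp 1 / q) with hadef
    have ha : a = 1 - Real.log q := by
      rw [hadef, Real.log_div (Real.exp_ne_zero _) hq0.ne', Real.log_exp]
    have ha1 : 1 ≤ a := by rw [ha]; linarith
    have hLe : L ^ (((k : ℝ) - 1) / 2) = Real.sqrt (L ^ (k - 1)) := by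
      rw [Real.sqrt_eq_rpow, ← Real.rpow_natCast L (k - 1), ← Real.rpow_mul (by linarith), hc]
      congr 1; ring
    by_cases hps : p ≤ 1 / (m : ℝ)
    · -- Case B : p ≤ 1/m < q
      rw [if_pos hps]
      have hlpm : 2 * Real.log q ≤ -Real.log m := by
        have := Real.log_le_log hppos hps
        rwa [one_div, Real.log_inv, hlp] at this
      set Ap : ℝ := (1 / (k : ℝ)) * Real.log (Real.exp k * (m : ℝ) ^ (k - 1) / p) with hAp
      have hApval : Ap = (1 / (k : ℝ)) *
          ((k : ℝ) + ((k - 1 : ℕ) : ℝ) * Real.log m - 2 * Real.log q) := by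
        rw [hAp, hlogE p hppos, hlp]
      have hAp0 : 0 ≤ Ap := by
        rw [hApval]
        have : 0 ≤ (k : ℝ) + ((k - 1 : ℕ) : ℝ) * Real.log m - 2 * Real.log q := by
          nlinarith [mul_nonneg hcnn hM0]
        positivity
      have hAp2a : Ap ≤ 2 * a := by
        rw [hApval, ha]
        have hX : (k : ℝ) + ((k - 1 : ℕ) : ℝ) * Real.log m - 2 * Real.log q
            ≤ (k : ℝ) * (2 * (1 - Real.log q)) := by
          have h1 : ((k - 1 : ℕ) : ℝ) * Real.log m ≤ ((k - 1 : ℕ) : ℝ) * (-2 * Real.log q) :=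
            mul_le_mul_of_nonneg_left (by linarith) hcnn
          rw [hc] at h1 ⊢
          nlinarith
        calc (1 / (k : ℝ)) * ((k : ℝ) + ((k - 1 : ℕ) : ℝ) * Real.log m - 2 * Real.log q)
            ≤ (1 / (k : ℝ)) * ((k : ℝ) * (2 * (1 - Real.log q))) :=
              mul_le_mul_of_nonneg_left hX (by positivity)
          _ = 2 * (1 - Real.log q) := by field_simp
      have hAp2L : Ap ≤ 2 * L := by
        rw [hApval, hL]
        have hX : (k : ℝ) + ((k - 1 : ℕ) : ℝ) * Real.log m - 2 * Real.log q
            ≤ (k : ℝ) * (2 * (1 + Real.log m)) := by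
          rw [hc]
          nlinarith
        calc (1 / (k : ℝ)) * ((k : ℝ) + ((k - 1 : ℕ) : ℝ) * Real.log m - 2 * Real.log q)
            ≤ (1 / (k : ℝ)) * ((k : ℝ) * (2 * (1 + Real.log m))) :=
              mul_le_mul_of_nonneg_left hX (by positivity)
          _ = 2 * (1 + Real.log m) := by field_simp
      have hmain : Ap ^ k ≤ (2 : ℝ) ^ k * a * L ^ (k - 1) := by
        have h2 : (2 : ℝ) ^ k = 2 * 2 ^ (k - 1) := by
          rw [← pow_succ', Nat.sub_add_cancel hk]
        calc Ap ^ k = Ap * Ap ^ (k - 1) := by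
              rw [← pow_succ', Nat.sub_add_cancel hk]
          _ ≤ (2 * a) * (2 * L) ^ (k - 1) := by
              apply mul_le_mul hAp2a (pow_le_pow_left₀ hAp0 hAp2L _) (pow_nonneg hAp0 _)
                (by linarith)
          _ = (2 : ℝ) ^ k * a * L ^ (k - 1) := by rw [mul_pow, h2]; ring
      have hkey : Ap ^ ((k : ℝ) / 2)
          ≤ Real.sqrt ((2 : ℝ) ^ k) * Real.sqrt a * Real.sqrt (L ^ (k - 1)) := by
        have hApe : Ap ^ ((k : ℝ) / 2) = Real.sqrt (Ap ^ k) := by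
          rw [Real.sqrt_eq_rpow, ← Real.rpow_natCast Ap k, ← Real.rpow_mul hAp0]
          congr 1; ring
        rw [hApe, ← Real.sqrt_mul (by positivity), ← Real.sqrt_mul (by positivity)]
        exact Real.sqrt_le_sqrt hmain
      calc p * Ap ^ ((k : ℝ) / 2)
          ≤ p * (Real.sqrt ((2 : ℝ) ^ k) * Real.sqrt a * Real.sqrt (L ^ (k - 1))) :=
            mul_le_mul_of_nonneg_left hkey hp0
        _ = Real.sqrt ((2 : ℝ) ^ k) * q * (q * Real.sqrt a * L ^ (((k : ℝ) - 1) / 2)) := by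
            rw [hLe, ← hq2]; ring
    · -- Case C : 1/m < p
      rw [if_neg hps]
      have hlep : Real.log (Real.exp 1 / p) = 1 - 2 * Real.log q := by
        rw [Real.log_div (Real.exp_ne_zero _) hppos.ne', Real.log_exp, hlp]
      have h2k2 : (2 : ℝ) ≤ 2 ^ k := by
        calc (2 : ℝ) = 2 ^ 1 := (pow_one 2).symm
          _ ≤ 2 ^ k := pow_le_pow_right₀ one_le_two hk
      have hkey : Real.sqrt (Real.log (Real.exp 1 / p))
          ≤ Real.sqrt ((2 : ℝ) ^ k) * Real.sqrt a := by
        rw [← Real.sqrt_mul (by positivity)]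
        apply Real.sqrt_le_sqrt
        rw [hlep, ha]
        nlinarith
      have hLnn : (0 : ℝ) ≤ L ^ (((k : ℝ) - 1) / 2) := Real.rpow_nonneg (by linarith) _
      calc p * Real.sqrt (Real.log (Real.exp 1 / p)) * L ^ (((k : ℝ) - 1) / 2)
          ≤ p * (Real.sqrt ((2 : ℝ) ^ k) * Real.sqrt a) * L ^ (((k : ℝ) - 1) / 2) := by
            apply mul_le_mul_of_nonneg_right (mul_le_mul_of_nonneg_left hkey hp0) hLnn
        _ = Real.sqrt ((2 : ℝ) ^ k) * q * (q * Real.sqrt a * L ^ (((k : ℝ) - 1) / 2)) := by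
            rw [← hq2]; ring
end
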